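/- arXiv:1506.03267 — 5 statements merged into one kernel-verified Lean document; each statement's English description precedes it below -/
import Mathlib

section
/- Let X be a finite-dimensional real vector space and let u : X → ℂ be a function such that for every half-line α = ℝ₊a (a ≠ 0) the limit U(α) := lim_{x→α} u(x) exists (where x → α means: for every ε > 0 there is an open truncated cone C eventually containing α with |u(x) − U(α)| < ε for all x ∈ C). Then the function U is continuous on the sphere at infinity 𝕊_X (with the quotient topology from X ∖ {0} under the ℝ₊-scaling action). -/
open Filter Topology Set MeasureTheory Bornology BoundedContinuousFunction

noncomputable section

section ConeDefs
variable {X : Type*} [SeminormedAddCommGroup X] [Module ℝ X]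

/-- A cone: a set stable under multiplication by positive scalars. -/
def IsCone (D : Set X) : Prop := ∀ x ∈ D, ∀ r : ℝ, 0 < r → r • x ∈ D

/-- A truncated cone: the intersection of a cone with the complement of a bounded set. -/
def IsTruncCone (C : Set X) : Prop :=
  ∃ D B : Set X, IsCone D ∧ Bornology.IsBounded B ∧ C = D ∩ Bᶜ

/-- The half-line through `a` is eventually in `C`. -/
def EvIn (a : X) (C : Set X) : Prop :=
  ∃ s : ℝ, 0 < s ∧ ∀ r : ℝ, 1 ≤ r → r • (s • a) ∈ C

/-- The filter of truncated-cone neighborhoods of the direction of `a`. -/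
def coneFilter (a : X) : Filter X :=
  Filter.generate {C | IsOpen C ∧ IsTruncCone C ∧ EvIn a C}

/-- The half-line `α` is eventually in `C`. -/
def RayEvIn (α : Module.Ray ℝ X) (C : Set X) : Prop :=
  ∃ (a : X) (ha : a ≠ 0), rayOfNeZero ℝ a ha = α ∧ ∀ r : ℝ, 1 ≤ r → r • a ∈ C

/-- The filter of truncated-cone neighborhoods of the half-line `α`. -/
def rayConeFilter (α : Module.Ray ℝ X) : Filter X :=
  Filter.generate {C | IsOpen C ∧ IsTruncCone C ∧ RayEvIn α C}

end ConeDefs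

instance instRayVectorTop {X : Type*} [SeminormedAddCommGroup X] [Module ℝ X] :
    TopologicalSpace (RayVector ℝ X) :=
  inferInstanceAs (TopologicalSpace {v : X // v ≠ 0})

/-- The sphere at infinity with the quotient topology from `X ∖ {0}`. -/
instance instSphereTop {X : Type*} [SeminormedAddCommGroup X] [Module ℝ X] :
    TopologicalSpace (Module.Ray ℝ X) :=
  inferInstanceAs (TopologicalSpace (Quotient (RayVector.Setoid ℝ X)))

/-- The spherical compactification `X̄ = X ⊔ 𝕊_X`. -/
def SphComp (X : Type*) [SeminormedAddCommGroup X] [Module ℝ X] : Type _ :=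
  X ⊕ Module.Ray ℝ X

instance instSphCompTop {X : Type*} [SeminormedAddCommGroup X] [Module ℝ X] :
    TopologicalSpace (SphComp X) :=
  TopologicalSpace.generateFrom
    ({s | ∃ O : Set X, IsOpen O ∧ s = Sum.inl '' O} ∪
     {s | ∃ C : Set X, IsOpen C ∧ IsTruncCone C ∧
          s = Sum.inl '' C ∪ Sum.inr '' {α : Module.Ray ℝ X | RayEvIn α C}})


section Aux
variable {X : Type*} [NormedAddCommGroup X] [NormedSpace ℝ X]

lemma evIn_sInter (b : X) {t : Set (Set X)} (ht : t.Finite)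
    (h : ∀ C ∈ t, EvIn b C) : EvIn b (⋂₀ t) := by
  revert h
  refine Set.Finite.induction_on (motive := fun t _ => (∀ C ∈ t, EvIn b C) → EvIn b (⋂₀ t)) t ht
    (fun _ => ⟨1, one_pos, by simp⟩) ?_
  intro C t hCt htf ih h
  · obtain ⟨s₁, hs₁, hC⟩ := h C (Set.mem_insert _ _)
    obtain ⟨s₂, hs₂, hT⟩ := ih fun D hD => h D (Set.mem_insert_of_mem _ hD)
    refine ⟨max s₁ s₂, lt_max_of_lt_left hs₁, fun r hr => ?_⟩
    rw [Set.sInter_insert]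
    have key : ∀ s' : ℝ, 0 < s' → s' ≤ max s₁ s₂ →
        r • (max s₁ s₂ • b) = (r * (max s₁ s₂ / s')) • (s' • b) ∧
        1 ≤ r * (max s₁ s₂ / s') := by
      intro s' hs' hle
      constructor
      · rw [smul_smul, smul_smul, mul_assoc, div_mul_cancel₀ _ hs'.ne']
      · have h1 : (1:ℝ) ≤ max s₁ s₂ / s' := (one_le_div hs').2 hle
        calc (1:ℝ) = 1 * 1 := by ring
          _ ≤ r * (max s₁ s₂ / s') := mul_le_mul hr h1 one_pos.le (by linarith)
    obtain ⟨e₁, l₁⟩ := key s₁ hs₁ (le_max_left _ _)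
    obtain ⟨e₂, l₂⟩ := key s₂ hs₂ (le_max_right _ _)
    exact ⟨e₁ ▸ hC _ l₁, e₂ ▸ hT _ l₂⟩

lemma isTruncCone_sInter {t : Set (Set X)} (ht : t.Finite)
    (h : ∀ C ∈ t, IsTruncCone C) : IsTruncCone (⋂₀ t) := by
  revert h
  refine Set.Finite.induction_on (motive := fun t _ => (∀ C ∈ t, IsTruncCone C) → IsTruncCone (⋂₀ t)) t ht
    (fun _ => ⟨Set.univ, ∅, fun x _ r _ => Set.mem_univ _, Bornology.isBounded_empty, by simp⟩) ?_
  intro C t hCt htf ih h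
  · obtain ⟨D₁, B₁, hD₁, hB₁, e₁⟩ := h C (Set.mem_insert _ _)
    obtain ⟨D₂, B₂, hD₂, hB₂, e₂⟩ := ih fun D hD => h D (Set.mem_insert_of_mem _ hD)
    refine ⟨D₁ ∩ D₂, B₁ ∪ B₂, fun x hx r hr => ⟨hD₁ x hx.1 r hr, hD₂ x hx.2 r hr⟩,
      hB₁.union hB₂, ?_⟩
    rw [Set.sInter_insert, e₁, e₂, Set.compl_union]
    ext x
    simp only [Set.mem_inter_iff, Set.mem_compl_iff]
    tauto

lemma coneFilter_neBot (b : X) : (coneFilter b).NeBot := by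
  rw [coneFilter, Filter.generate_neBot_iff]
  intro t hts htf
  obtain ⟨s, hs, hmem⟩ := evIn_sInter b htf fun C hC => (hts hC).2.2
  exact ⟨s • b, by simpa using hmem 1 le_rfl⟩

lemma isOpen_goodSet {C D B : Set X} (hCo : IsOpen C) (hD : IsCone D)
    (hB : Bornology.IsBounded B) (hC : C = D ∩ Bᶜ) :
    IsOpen {x : X | x ≠ 0 ∧ ∃ s : ℝ, 0 < s ∧ ∀ r : ℝ, 1 ≤ r → r • (s • x) ∈ C} := by
  rw [Metric.isOpen_iff]
  rintro v ⟨hv0, s, hs, hsv⟩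
  obtain ⟨R, hR⟩ := hB.exists_norm_le
  have hnv : (0:ℝ) < ‖v‖ := norm_pos_iff.2 hv0
  have hsnv : (0:ℝ) < s * ‖v‖ := mul_pos hs hnv
  set r₀ : ℝ := max 1 ((R + 1) / (s * ‖v‖)) with hr₀def
  have hr₀1 : (1:ℝ) ≤ r₀ := le_max_left _ _
  have hr₀pos : (0:ℝ) < r₀ := lt_of_lt_of_le one_pos hr₀1
  have hpC : r₀ • (s • v) ∈ C := hsv r₀ hr₀1
  set p : X := r₀ • (s • v) with hpdef
  have hnp : ‖p‖ = r₀ * (s * ‖v‖) := by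
    rw [hpdef, norm_smul, norm_smul, Real.norm_of_nonneg hr₀pos.le,
      Real.norm_of_nonneg hs.le]
  have hpR : R + 1 ≤ ‖p‖ := by
    rw [hnp]
    calc R + 1 = ((R + 1) / (s * ‖v‖)) * (s * ‖v‖) := by field_simp
      _ ≤ r₀ * (s * ‖v‖) := by
          apply mul_le_mul_of_nonneg_right (le_max_right _ _) hsnv.le
  obtain ⟨δ, hδ, hball⟩ := Metric.isOpen_iff.1 hCo p hpC
  set δ₁ : ℝ := min δ 1 with hδ₁def
  have hδ₁pos : 0 < δ₁ := lt_min hδ one_pos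
  set ε : ℝ := min ‖v‖ (δ₁ / (r₀ * s)) with hεdef
  have hr₀s : (0:ℝ) < r₀ * s := mul_pos hr₀pos hs
  refine ⟨ε, lt_min hnv (div_pos hδ₁pos hr₀s), fun v' hv' => ?_⟩
  rw [Metric.mem_ball, dist_eq_norm] at hv'
  have hv'v : ‖v' - v‖ < ε := hv'
  have hv'0 : v' ≠ 0 := by
    intro h
    rw [h, zero_sub, norm_neg] at hv'v
    exact absurd (lt_of_lt_of_le hv'v (min_le_left _ _)) (lt_irrefl _)
  set p' : X := (r₀ * s) • v' with hp'def
  have hpp' : ‖p' - p‖ < δ₁ := by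
    have : p' - p = (r₀ * s) • (v' - v) := by
      rw [hp'def, hpdef, smul_smul, smul_sub]
    rw [this, norm_smul, Real.norm_of_nonneg hr₀s.le]
    calc r₀ * s * ‖v' - v‖ < r₀ * s * (δ₁ / (r₀ * s)) :=
          mul_lt_mul_of_pos_left (lt_of_lt_of_le hv'v (min_le_right _ _)) hr₀s
      _ = δ₁ := by field_simp
  have hp'C : p' ∈ C := hball (by
    rw [Metric.mem_ball, dist_eq_norm]
    exact lt_of_lt_of_le hpp' (min_le_left _ _))
  have hp'R : R < ‖p'‖ := by
    have h1 : ‖p‖ - ‖p'‖ ≤ ‖p' - p‖ := by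
      have := norm_sub_norm_le p p'
      rwa [← norm_neg (p - p'), neg_sub] at this
    have h2 : δ₁ ≤ 1 := min_le_right _ _
    linarith
  refine ⟨hv'0, r₀ * s, hr₀s, fun r hr => ?_⟩
  have hrpos : (0:ℝ) < r := lt_of_lt_of_le one_pos hr
  have hmemD : r • p' ∈ D := by
    rw [hC] at hp'C
    exact hD p' hp'C.1 r hrpos
  have hmemB : r • p' ∉ B := by
    intro hmem
    have := hR _ hmem
    rw [norm_smul, Real.norm_of_nonneg hrpos.le] at this
    have h2 : ‖p'‖ ≤ r * ‖p'‖ := le_mul_of_one_le_left (norm_nonneg _) hr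
    linarith
  rw [smul_smul, ← smul_smul, ← hp'def] -- r • ((r₀*s) • v') = r • p'
  rw [hC]
  exact ⟨hmemD, hmemB⟩

end Aux


/-- if `u : X → ℂ` has a limit `U(α)` along every half-line `α`
(in the truncated-cone sense), then `U` is continuous on the sphere at infinity
`𝕊_X = Module.Ray ℝ X` (with the quotient topology from `X ∖ {0}`). -/
theorem statement0 {X : Type*} [NormedAddCommGroup X] [NormedSpace ℝ X]
    [FiniteDimensional ℝ X]
    (u : X → ℂ) (U : Module.Ray ℝ X → ℂ)
    (hU : ∀ (a : X) (ha : a ≠ 0),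
      Filter.Tendsto u (coneFilter a) (nhds (U (rayOfNeZero ℝ a ha)))) :
    Continuous U := by
  rw [continuous_iff_continuousAt]
  intro α
  induction α using Module.Ray.ind with
  | h a ha =>
  rw [ContinuousAt, Metric.tendsto_nhds]
  intro ε hε
  set α := rayOfNeZero ℝ a ha with hαdef
  have hball : Metric.ball (U α) (ε / 2) ∈ nhds (U α) :=
    Metric.ball_mem_nhds _ (by linarith)
  have hpre := (hU a ha) hball
  rw [coneFilter, Filter.mem_map, Filter.mem_generate_iff] at hpre
  obtain ⟨t, hts, htf, htsub⟩ := hpre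
  set C : Set X := ⋂₀ t with hCdef
  have hCopen : IsOpen C := Set.Finite.isOpen_sInter htf fun D hD => (hts hD).1
  have hCtc : IsTruncCone C := isTruncCone_sInter htf fun D hD => (hts hD).2.1
  have hCev : EvIn a C := evIn_sInter a htf fun D hD => (hts hD).2.2
  have hCbound : ∀ x ∈ C, dist (u x) (U α) < ε / 2 := by
    intro x hx
    have := htsub hx
    rwa [Set.mem_preimage, Metric.mem_ball] at this
  obtain ⟨D, B, hD, hB, hCDB⟩ := hCtc
  set W : Set X := {x | x ≠ 0 ∧ ∃ s : ℝ, 0 < s ∧ ∀ r : ℝ, 1 ≤ r → r • (s • x) ∈ C} with hWdef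
  have hWopen : IsOpen W := isOpen_goodSet hCopen hD hB hCDB
  set S : Set (Module.Ray ℝ X) := {β | RayEvIn β C} with hSdef
  have hmk : ∀ v : RayVector ℝ X,
      (⟦v⟧ : Module.Ray ℝ X) = rayOfNeZero ℝ v.1 v.2 := by
    intro v; cases v; rfl
  have hpreim : (Quotient.mk (RayVector.Setoid ℝ X)) ⁻¹' S = Subtype.val ⁻¹' W := by
    ext v
    simp only [Set.mem_preimage, hSdef, Set.mem_setOf_eq, hWdef]
    constructor
    · rintro ⟨b, hb, hray, hmem⟩
      rw [hmk v, ray_eq_iff] at hray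
      obtain ⟨s, hs, hsb⟩ := hray.symm.exists_pos_left v.2 hb
      refine ⟨v.2, s, hs, fun r hr => ?_⟩
      rw [hsb]
      exact hmem r hr
    · rintro ⟨hv0, s, hs, hmem⟩
      exact ⟨s • v.1, smul_ne_zero hs.ne' hv0,
        by rw [hmk v]; exact ray_pos_smul v.2 hs _, hmem⟩
  have hSopen : IsOpen S := by
    refine (isOpen_coinduced (f := Quotient.mk (RayVector.Setoid ℝ X))).mpr ?_
    rw [hpreim]
    exact hWopen.preimage continuous_subtype_val
  have hαS : α ∈ S := by
    obtain ⟨s, hs, hmem⟩ := hCev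
    exact ⟨s • a, smul_ne_zero hs.ne' ha, ray_pos_smul ha hs _, hmem⟩
  refine Filter.eventually_of_mem (hSopen.mem_nhds hαS) fun β hβ => ?_
  obtain ⟨b, hb, hray, hmem⟩ := hβ
  haveI := coneFilter_neBot b
  have htend : Filter.Tendsto u (coneFilter b) (nhds (U β)) := by
    have := hU b hb
    rwa [hray] at this
  have hCmem : C ∈ coneFilter b := by
    rw [coneFilter, Filter.mem_generate_iff]
    refine ⟨{C}, ?_, Set.finite_singleton _, by simp⟩
    rintro E rfl
    exact ⟨hCopen, ⟨D, B, hD, hB, hCDB⟩,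
      ⟨1, one_pos, fun r hr => by simpa using hmem r hr⟩⟩
  have hle : dist (U β) (U α) ≤ ε / 2 := by
    have hdist : Filter.Tendsto (fun x => dist (u x) (U α)) (coneFilter b)
        (nhds (dist (U β) (U α))) := htend.dist tendsto_const_nhds
    exact le_of_tendsto hdist
      (Filter.eventually_of_mem hCmem fun x hx => (hCbound x hx).le)
  linarith
end
end

section
/- Let X be a finite-dimensional real vector space. The algebra C(X̄) of continuous functions on the spherical compactification, viewed as a subalgebra of the bounded continuous functions on X by restriction, equals the closure in the sup-norm of the algebra C_h(X) of continuous functions that are homogeneous of degree zero outside a compact set (i.e., there exists a compact K with u(λx) = u(x) for all x ∉ K and λ ≥ 1). -/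
open Filter Topology Set MeasureTheory Bornology BoundedContinuousFunction

noncomputable section

/-- Bounded continuous functions on `X` extending continuously to `X̄`. -/
def SphContSet (X : Type*) [NormedAddCommGroup X] [NormedSpace ℝ X] : Set (X →ᵇ ℂ) :=
  {u | ∃ v : C(SphComp X, ℂ), ∀ x : X, u x = v (Sum.inl x)}

/-- Bounded continuous functions homogeneous of degree zero outside a compact set. -/
def HomogSet (X : Type*) [NormedAddCommGroup X] [NormedSpace ℝ X] : Set (X →ᵇ ℂ) :=
  {u | ∃ K : Set X, IsCompact K ∧ ∀ x : X, x ∉ K → ∀ r : ℝ, 1 ≤ r → u (r • x) = u x}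

section Helpers
variable {X : Type*} [SeminormedAddCommGroup X] [Module ℝ X]

lemma exists_ray_rep (α : Module.Ray ℝ X) : ∃ (a : X) (ha : a ≠ 0), rayOfNeZero ℝ a ha = α := by
  induction α using Module.Ray.ind with
  | h a ha => exact ⟨a, ha, rfl⟩

lemma RayEvIn.inter {α : Module.Ray ℝ X} {C₁ C₂ : Set X}
    (h₁ : RayEvIn α C₁) (h₂ : RayEvIn α C₂) : RayEvIn α (C₁ ∩ C₂) := by
  obtain ⟨a, ha, hra, hma⟩ := h₁
  obtain ⟨b, hb, hrb, hmb⟩ := h₂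
  obtain ⟨t, ht, htab⟩ := ((ray_eq_iff ha hb).1 (hra.trans hrb.symm)).exists_pos_left ha hb
  have hmax : (0:ℝ) < max 1 t := lt_of_lt_of_le one_pos (le_max_left _ _)
  have hc : max 1 t • a ≠ 0 := smul_ne_zero hmax.ne' ha
  refine ⟨max 1 t • a, hc, by rw [ray_pos_smul ha hmax hc, hra], fun r hr => ?_⟩
  constructor
  · have : r • max 1 t • a = (r * max 1 t) • a := (smul_smul _ _ _)
    rw [this]
    exact hma _ (by nlinarith [le_max_left 1 t])
  · have hr2 : r • max 1 t • a = (r * max 1 t / t) • b := by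
      rw [← htab, smul_smul, smul_smul]
      congr 1
      field_simp
    rw [hr2]
    refine hmb _ ?_
    rw [le_div_iff₀ ht]
    nlinarith [le_max_right 1 t]

lemma IsTruncCone.inter {C₁ C₂ : Set X} (h₁ : IsTruncCone C₁) (h₂ : IsTruncCone C₂) :
    IsTruncCone (C₁ ∩ C₂) := by
  obtain ⟨D₁, B₁, hD₁, hB₁, rfl⟩ := h₁
  obtain ⟨D₂, B₂, hD₂, hB₂, rfl⟩ := h₂
  refine ⟨D₁ ∩ D₂, B₁ ∪ B₂, fun x hx r hr => ⟨hD₁ x hx.1 r hr, hD₂ x hx.2 r hr⟩,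
    hB₁.union hB₂, ?_⟩
  ext x
  simp only [mem_inter_iff, mem_compl_iff, mem_union]
  tauto

lemma isOpen_gen₂ {C : Set X} (hC : IsOpen C) (hTC : IsTruncCone C) :
    IsOpen (Sum.inl '' C ∪ Sum.inr '' {α : Module.Ray ℝ X | RayEvIn α C} : Set (SphComp X)) :=
  TopologicalSpace.GenerateOpen.basic _ (Or.inr ⟨C, hC, hTC, rfl⟩)

lemma exists_cone_of_isOpen {U : Set (SphComp X)} (hU : IsOpen U) {α : Module.Ray ℝ X}
    (hα : Sum.inr α ∈ U) :
    ∃ C : Set X, IsOpen C ∧ IsTruncCone C ∧ RayEvIn α C ∧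
      Sum.inl '' C ∪ Sum.inr '' {β : Module.Ray ℝ X | RayEvIn β C} ⊆ U := by
  have hU' : TopologicalSpace.GenerateOpen
      ({s | ∃ O : Set X, IsOpen O ∧ s = Sum.inl '' O} ∪
       {s | ∃ C : Set X, IsOpen C ∧ IsTruncCone C ∧
            s = Sum.inl '' C ∪ Sum.inr '' {α : Module.Ray ℝ X | RayEvIn α C}}) U := hU
  clear hU
  revert hα
  induction hU' with
  | basic s hs =>
    intro hα
    rcases hs with ⟨O, hO, rfl⟩ | ⟨C, hC, hTC, rfl⟩
    · exact absurd hα (by rintro ⟨x, _, hx⟩; cases hx)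
    · refine ⟨C, hC, hTC, ?_, subset_rfl⟩
      rcases hα with ⟨x, _, hx⟩ | ⟨β, hβ, hb⟩
      · exact absurd hx (by simp)
      · exact (Sum.inr_injective hb) ▸ hβ
  | univ =>
    intro _
    obtain ⟨a, ha, hra⟩ := exists_ray_rep α
    exact ⟨univ, isOpen_univ, ⟨univ, ∅, fun x _ r _ => trivial, isBounded_empty, by simp⟩,
      ⟨a, ha, hra, fun r _ => trivial⟩, subset_univ _⟩
  | inter U V hUo hVo ihU ihV =>
    intro hα
    obtain ⟨C₁, hC₁o, hC₁t, hC₁r, hC₁s⟩ := ihU hα.1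
    obtain ⟨C₂, hC₂o, hC₂t, hC₂r, hC₂s⟩ := ihV hα.2
    refine ⟨C₁ ∩ C₂, hC₁o.inter hC₂o, hC₁t.inter hC₂t, hC₁r.inter hC₂r, ?_⟩
    rintro p (⟨x, hx, rfl⟩ | ⟨β, hβ, rfl⟩)
    · exact ⟨hC₁s (Or.inl ⟨x, hx.1, rfl⟩), hC₂s (Or.inl ⟨x, hx.2, rfl⟩)⟩
    · obtain ⟨b, hb, hrb, hmb⟩ := hβ
      exact ⟨hC₁s (Or.inr ⟨β, ⟨b, hb, hrb, fun r hr => (hmb r hr).1⟩, rfl⟩),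
        hC₂s (Or.inr ⟨β, ⟨b, hb, hrb, fun r hr => (hmb r hr).2⟩, rfl⟩)⟩
  | sUnion S hS ih =>
    intro hα
    obtain ⟨s, hsS, hαs⟩ := hα
    obtain ⟨C, h1, h2, h3, h4⟩ := ih s hsS hαs
    exact ⟨C, h1, h2, h3, h4.trans (subset_sUnion_of_mem hsS)⟩

lemma exists_cone_mem_nhds {α : Module.Ray ℝ X} {S : Set (SphComp X)}
    (hS : S ∈ (𝓝 (Sum.inr α) : Filter (SphComp X))) :
    ∃ C : Set X, IsOpen C ∧ IsTruncCone C ∧ RayEvIn α C ∧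
      Sum.inl '' C ∪ Sum.inr '' {β : Module.Ray ℝ X | RayEvIn β C} ⊆ S := by
  obtain ⟨U, hUS, hUopen, hmem⟩ := mem_nhds_iff.1 hS
  obtain ⟨C, h1, h2, h3, h4⟩ := exists_cone_of_isOpen hUopen hmem
  exact ⟨C, h1, h2, h3, h4.trans hUS⟩

lemma sph_continuous_inl : @Continuous X (SphComp X) _ instSphCompTop Sum.inl := by
  have hinst : (instSphCompTop : TopologicalSpace (SphComp X)) = TopologicalSpace.generateFrom
    ({s | ∃ O : Set X, IsOpen O ∧ s = Sum.inl '' O} ∪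
     {s | ∃ C : Set X, IsOpen C ∧ IsTruncCone C ∧
          s = Sum.inl '' C ∪ Sum.inr '' {α : Module.Ray ℝ X | RayEvIn α C}}) := rfl
  rw [hinst]
  refine continuous_generateFrom_iff.2 ?_
  rintro s (⟨O, hO, rfl⟩ | ⟨C, hC, _, rfl⟩)
  · convert hO using 1
    exact preimage_image_eq _ Sum.inl_injective
  · have : Sum.inl ⁻¹' (Sum.inl '' C ∪ Sum.inr '' {α : Module.Ray ℝ X | RayEvIn α C}) = C := by
      ext x; simp
    convert hC using 1
    exact this

lemma sph_isOpenMap_inl : @IsOpenMap X (SphComp X) _ instSphCompTop Sum.inl :=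
  fun O hO => TopologicalSpace.GenerateOpen.basic _ (Or.inl ⟨O, hO, rfl⟩)

lemma map_nhds_inl (x : X) :
    Filter.map (Sum.inl : X → SphComp X) (𝓝 x) = (𝓝 (Sum.inl x) : Filter (SphComp X)) :=
  le_antisymm (sph_continuous_inl.continuousAt) (sph_isOpenMap_inl.nhds_le x)

lemma sph_denseRange_inl : @DenseRange (SphComp X) instSphCompTop X Sum.inl := by
  intro p
  rcases p with x | α
  case inl => exact subset_closure ⟨x, rfl⟩
  case inr =>
    refine mem_closure_iff_nhds.2 ?_
    intro S hS
    obtain ⟨C, -, -, ⟨a, ha, -, hmem⟩, hsub⟩ := exists_cone_mem_nhds hS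
    exact ⟨Sum.inl a, hsub (Or.inl ⟨a, by simpa using hmem 1 le_rfl, rfl⟩), a, rfl⟩

lemma dist_le_of_dist_inl_le {f g : C(SphComp X, ℂ)} {c : ℝ}
    (h : ∀ x : X, dist (f (Sum.inl x)) (g (Sum.inl x)) ≤ c) (p : SphComp X) :
    dist (f p) (g p) ≤ c := by
  have hcl : IsClosed {p : SphComp X | dist (f p) (g p) ≤ c} :=
    isClosed_le (f.continuous.dist g.continuous) continuous_const
  have h2 : closure (Set.range Sum.inl : Set (SphComp X)) ⊆ {p | dist (f p) (g p) ≤ c} :=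
    hcl.closure_subset_iff.2 (by rintro _ ⟨x, rfl⟩; exact h x)
  exact h2 (by rw [DenseRange.closure_range sph_denseRange_inl]; trivial)

end Helpers

section PartA
variable {X : Type*} [NormedAddCommGroup X] [NormedSpace ℝ X]

lemma homog_subset_sphCont : HomogSet X ⊆ SphContSet X := by
  rintro u ⟨K, hK, hhom⟩
  obtain ⟨R₀, hKR₀⟩ := hK.isBounded.subset_closedBall 0
  set R : ℝ := max R₀ 1 with hRdef
  have hR1 : (1:ℝ) ≤ R := le_max_right _ _
  have hR0 : (0:ℝ) < R := lt_of_lt_of_le one_pos hR1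
  have hnotK : ∀ x : X, R < ‖x‖ → x ∉ K := by
    intro x hx hxK
    have h1 := hKR₀ hxK
    rw [Metric.mem_closedBall, dist_zero_right] at h1
    have h2 : ‖x‖ ≤ R := h1.trans (le_max_left _ _)
    linarith
  have hf : ∀ a b : RayVector ℝ X, a ≈ b →
      u ((2*R/‖(a:X)‖) • (a:X)) = u ((2*R/‖(b:X)‖) • (b:X)) := by
    rintro ⟨a, ha⟩ ⟨b, hb⟩ hab
    obtain ⟨t, ht, htab⟩ := (equiv_iff_sameRay.1 hab).exists_pos_left ha hb
    have hna : ‖a‖ ≠ 0 := norm_ne_zero_iff.2 ha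
    have htab' : t • a = b := htab
    show u ((2*R/‖a‖) • a) = u ((2*R/‖b‖) • b)
    rw [← htab']
    congr 1
    rw [norm_smul, Real.norm_of_nonneg ht.le, smul_smul]
    congr 1
    field_simp
  set w : Module.Ray ℝ X → ℂ := fun α => Quotient.lift
      (fun a : RayVector ℝ X => u ((2*R/‖(a:X)‖) • (a:X))) hf α with hwdef
  have hw : ∀ (a : X) (ha : a ≠ 0), w (rayOfNeZero ℝ a ha) = u ((2*R/‖a‖) • a) :=
    fun a ha => rfl
  have hcont : @Continuous (SphComp X) ℂ instSphCompTop _ (Sum.elim u w) := by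
    refine continuous_iff_continuousAt.2 ?_
    intro p
    rcases p with x | α
    case inl =>
      show @Filter.Tendsto (SphComp X) ℂ (Sum.elim u w) (@nhds (SphComp X) instSphCompTop (Sum.inl x)) (𝓝 (Sum.elim u w (Sum.inl x)))
      rw [← map_nhds_inl]
      refine Filter.tendsto_map'_iff.2 ?_
      exact u.continuous.continuousAt
    case inr =>
      show @Filter.Tendsto (SphComp X) ℂ (Sum.elim u w) (@nhds (SphComp X) instSphCompTop (Sum.inr α)) (𝓝 (Sum.elim u w (Sum.inr α)))
      refine Metric.tendsto_nhds.2 ?_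
      intro ε hε
      obtain ⟨a0, ha0, hray0⟩ := exists_ray_rep α
      have hna0 : (0:ℝ) < ‖a0‖ := norm_pos_iff.2 ha0
      have hc' : (0:ℝ) < 2*R/‖a0‖ := by positivity
      have hkey0 : rayOfNeZero ℝ ((2*R/‖a0‖) • a0) (smul_ne_zero hc'.ne' ha0) = α :=
        (ray_pos_smul ha0 hc' _).trans hray0
      set a' : X := (2*R/‖a0‖) • a0 with ha'def
      have ha' : a' ≠ 0 := smul_ne_zero hc'.ne' ha0
      have hna' : ‖a'‖ = 2*R := by
        rw [ha'def, norm_smul, Real.norm_of_nonneg hc'.le]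
        field_simp
      have hray' : rayOfNeZero ℝ a' ha' = α := hkey0
      have hval : Sum.elim (⇑u) w (Sum.inr α) = u a' := by
        rw [Sum.elim_inr, ← hray', hw a' ha', hna']
        rw [div_self (by linarith : (2*R) ≠ 0), one_smul]
      obtain ⟨δ0, hδ0, hδ⟩ := Metric.continuous_iff.1 u.continuous a' ε hε
      set δ := min δ0 (R/2) with hδdef
      have hδpos : 0 < δ := lt_min hδ0 (by linarith)
      have hδR : δ < R := lt_of_le_of_lt (min_le_right _ _) (by linarith)
      have hδδ0 : δ ≤ δ0 := min_le_left _ _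
      set D : Set X := ⋃ r ∈ Set.Ioi (0:ℝ), (fun x : X => r • x) ⁻¹' Metric.ball a' δ
        with hDdef
      have hDopen : IsOpen D :=
        isOpen_biUnion fun r _ => Metric.isOpen_ball.preimage (continuous_const_smul r)
      have hDmem : ∀ x : X, x ∈ D ↔ ∃ r : ℝ, 0 < r ∧ dist (r • x) a' < δ := by
        intro x
        simp [hDdef, Metric.mem_ball]
      have hDcone : IsCone D := by
        intro x hx s hs
        obtain ⟨r, hr, hrx⟩ := (hDmem x).1 hx
        refine (hDmem _).2 ⟨r/s, div_pos hr hs, ?_⟩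
        rwa [smul_smul, div_mul_cancel₀ _ hs.ne']
      set C : Set X := D ∩ (Metric.closedBall (0:X) R)ᶜ with hCdef
      have hCx : ∀ x ∈ C, R < ‖x‖ := by
        intro x hx
        have h1 := hx.2
        simp only [mem_compl_iff, Metric.mem_closedBall, dist_zero_right, not_le] at h1
        exact h1
      have E1 : ∀ x ∈ C, dist (u x) (u a') < ε := by
        intro x hx
        obtain ⟨r, hr, hrx⟩ := (hDmem x).1 hx.1
        have hnrx : R < ‖r • x‖ := by
          have h1 : ‖a'‖ - ‖r • x‖ ≤ dist (r • x) a' := by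
            rw [dist_comm, dist_eq_norm]
            exact norm_sub_norm_le _ _
          rw [hna'] at h1
          linarith
        have hux : u x = u (r • x) := by
          rcases le_or_gt 1 r with h | h
          · exact (hhom x (hnotK x (hCx x hx)) r h).symm
          · have hxr : (1/r) • (r • x) = x := by
              rw [smul_smul, one_div_mul_cancel hr.ne', one_smul]
            have h1r : (1:ℝ) ≤ 1/r := by
              rw [le_div_iff₀ hr]
              linarith
            have h2 := hhom (r • x) (hnotK _ hnrx) (1/r) h1r
            rw [hxr] at h2
            exact h2
        rw [hux]
        exact hδ _ (lt_of_lt_of_le hrx hδδ0)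
      have hrayC : RayEvIn α C := by
        refine ⟨a', ha', hray', fun r hr => ⟨(hDmem _).2 ⟨1/r, by positivity, ?_⟩, ?_⟩⟩
        · rw [smul_smul, one_div_mul_cancel (by linarith : r ≠ 0), one_smul]
          simpa using hδpos
        · simp only [mem_compl_iff, Metric.mem_closedBall, dist_zero_right, not_le]
          rw [norm_smul, Real.norm_of_nonneg (by linarith : (0:ℝ) ≤ r), hna']
          nlinarith
      have hCtc : IsTruncCone C :=
        ⟨D, Metric.closedBall 0 R, hDcone, Metric.isBounded_closedBall, rfl⟩
      have hCopen : IsOpen C := hDopen.inter Metric.isClosed_closedBall.isOpen_compl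
      refine Filter.eventually_of_mem
        ((isOpen_gen₂ hCopen hCtc).mem_nhds (Or.inr ⟨α, hrayC, rfl⟩)) ?_
      rintro p (⟨x, hx, rfl⟩ | ⟨β, hβ, rfl⟩)
      · rw [hval, Sum.elim_inl]
        exact E1 x hx
      · rw [hval, Sum.elim_inr]
        obtain ⟨b, hb, hrayb, hmemb⟩ := hβ
        have hnb : (0:ℝ) < ‖b‖ := norm_pos_iff.2 hb
        rw [← hrayb, hw b hb]
        set r : ℝ := max 1 (2*R/‖b‖) with hrdef
        have hr1 : (1:ℝ) ≤ r := le_max_left _ _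
        have hrb : r • b ∈ C := hmemb r hr1
        have hcb : (0:ℝ) < 2*R/‖b‖ := by positivity
        have hb' : (2*R/‖b‖) • b ≠ 0 := smul_ne_zero hcb.ne' hb
        have hnb' : ‖(2*R/‖b‖) • b‖ = 2*R := by
          rw [norm_smul, Real.norm_of_nonneg hcb.le]
          field_simp
        have hKb' : (2*R/‖b‖) • b ∉ K := hnotK _ (by rw [hnb']; linarith)
        have hs1 : (1:ℝ) ≤ r * ‖b‖ / (2*R) := by
          rw [le_div_iff₀ (by linarith : (0:ℝ) < 2*R)]
          have h2 : 2*R/‖b‖ ≤ r := le_max_right _ _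
          have h3 : (2*R/‖b‖) * ‖b‖ = 2*R := by field_simp
          nlinarith
        have hsb : (r * ‖b‖ / (2*R)) • ((2*R/‖b‖) • b) = r • b := by
          rw [smul_smul]
          congr 1
          field_simp
        have hub : u ((2*R/‖b‖) • b) = u (r • b) := by
          rw [← hsb]
          exact (hhom _ hKb' _ hs1).symm
        rw [hub]
        exact E1 _ hrb
  exact ⟨⟨Sum.elim u w, hcont⟩, fun x => rfl⟩

end PartA

section PartB
variable {X : Type*} [NormedAddCommGroup X] [NormedSpace ℝ X]

set_option synthInstance.maxHeartbeats 1000000 in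
lemma isClosed_sphCont : IsClosed (SphContSet X) := by
  refine isClosed_of_closure_subset ?_
  intro u hu
  obtain ⟨U, hU, hlim⟩ := mem_closure_iff_seq_limit.1 hu
  choose V hV using hU
  have hbd : ∀ n p, dist (V n p) 0 ≤ ‖U n‖ := by
    intro n
    refine dist_le_of_dist_inl_le (g := ContinuousMap.const (SphComp X) 0) ?_
    intro x
    rw [← hV n x]
    show dist (U n x) 0 ≤ _
    rw [dist_zero_right]
    exact (U n).norm_coe_le_norm x
  set W : ℕ → (SphComp X →ᵇ ℂ) := fun n =>
    ⟨V n, ⟨2 * ‖U n‖, fun p q => by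
      calc dist (V n p) (V n q) ≤ dist (V n p) 0 + dist (V n q) 0 := dist_triangle_right _ _ _
      _ ≤ ‖U n‖ + ‖U n‖ := add_le_add (hbd n p) (hbd n q)
      _ = 2 * ‖U n‖ := by ring⟩⟩ with hWdef
  have hWdist : ∀ n m, dist (W n) (W m) ≤ dist (U n) (U m) := by
    intro n m
    refine (BoundedContinuousFunction.dist_le dist_nonneg).2 fun p => ?_
    refine dist_le_of_dist_inl_le (f := (W n).toContinuousMap) (g := (W m).toContinuousMap) ?_ p
    intro x
    have : dist (V n (Sum.inl x)) (V m (Sum.inl x)) = dist (U n x) (U m x) := by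
      rw [← hV n x, ← hV m x]
    show dist (V n (Sum.inl x)) (V m (Sum.inl x)) ≤ _
    rw [this]
    exact BoundedContinuousFunction.dist_coe_le_dist (f := U n) (g := U m) x
  have hWcauchy : CauchySeq W := by
    rw [Metric.cauchySeq_iff]
    intro ε hε
    obtain ⟨N, hN⟩ := Metric.cauchySeq_iff.1 hlim.cauchySeq ε hε
    exact ⟨N, fun m hm n hn => lt_of_le_of_lt (hWdist m n) (hN m hm n hn)⟩
  obtain ⟨Wl, hWl⟩ := cauchySeq_tendsto_of_complete hWcauchy
  refine ⟨Wl.toContinuousMap, fun x => ?_⟩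
  have h1 : Filter.Tendsto (fun n => U n x) Filter.atTop (𝓝 (u x)) := by
    refine tendsto_iff_dist_tendsto_zero.2 (squeeze_zero (fun n => dist_nonneg)
      (fun n => BoundedContinuousFunction.dist_coe_le_dist x)
      (tendsto_iff_dist_tendsto_zero.1 hlim))
  have h2 : Filter.Tendsto (fun n => W n (Sum.inl x)) Filter.atTop (𝓝 (Wl (Sum.inl x))) := by
    refine tendsto_iff_dist_tendsto_zero.2 (squeeze_zero (fun n => dist_nonneg)
      (fun n => BoundedContinuousFunction.dist_coe_le_dist (f := W n) (g := Wl) (Sum.inl x))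
      (tendsto_iff_dist_tendsto_zero.1 hWl))
  have h3 : ∀ n, W n (Sum.inl x) = U n x := fun n => (hV n x).symm
  rw [funext h3] at h2
  exact tendsto_nhds_unique h1 h2
end PartB

section PartC
variable {X : Type*} [NormedAddCommGroup X] [NormedSpace ℝ X] [FiniteDimensional ℝ X]

lemma sphCont_subset_closure : SphContSet X ⊆ closure (HomogSet X) := by
  rintro u ⟨v, hv⟩
  rw [Metric.mem_closure_iff]
  intro ε hε
  have hε' : 0 < ε/3 := by linarith
  have hgood : ∀ i : Metric.sphere (0:X) 1, ∃ (C : Set X) (ρ : ℝ), 0 < ρ ∧ IsOpen C ∧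
      (∃ t : ℝ, 0 < t ∧ t • (i:X) ∈ C) ∧
      (∀ y : X, ‖y‖ = 1 → (∃ t : ℝ, 0 < t ∧ t • y ∈ C) → ∀ r : ℝ, ρ ≤ r → r • y ∈ C) ∧
      (∀ x ∈ C, ∀ z ∈ C, dist (u x) (u z) ≤ 2*(ε/3)) := by
    rintro ⟨a, hamem⟩
    have ha1 : ‖a‖ = 1 := mem_sphere_zero_iff_norm.1 hamem
    have ha : a ≠ 0 := by
      intro h
      rw [h] at ha1
      simp at ha1
    have hca : ContinuousAt v (Sum.inr (rayOfNeZero ℝ a ha)) := v.continuous.continuousAt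
    have hpre : v ⁻¹' Metric.closedBall (v (Sum.inr (rayOfNeZero ℝ a ha))) (ε/3) ∈
        (𝓝 (Sum.inr (rayOfNeZero ℝ a ha)) : Filter (SphComp X)) :=
      hca (Metric.closedBall_mem_nhds _ hε')
    obtain ⟨C, hCo, hCt, hCr, hCsub⟩ := exists_cone_mem_nhds hpre
    have hest : ∀ x ∈ C, dist (u x) (v (Sum.inr (rayOfNeZero ℝ a ha))) ≤ ε/3 := by
      intro x hx
      have h1 := hCsub (Or.inl ⟨x, hx, rfl⟩)
      replace h1 : dist (v (Sum.inl x)) (v (Sum.inr (rayOfNeZero ℝ a ha))) ≤ ε/3 := h1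
      rw [hv x]
      exact h1
    obtain ⟨D, B, hD, hB, rfl⟩ := hCt
    obtain ⟨ρ₀, hBρ⟩ := hB.subset_ball 0
    refine ⟨D ∩ Bᶜ, max ρ₀ 1, lt_of_lt_of_le one_pos (le_max_right _ _), hCo, ?_, ?_, ?_⟩
    · obtain ⟨b, hb, hrayb, hmemb⟩ := hCr
      obtain ⟨t, ht, htb⟩ := ((ray_eq_iff hb ha).1 hrayb).exists_pos_left hb ha
      refine ⟨1/t, by positivity, ?_⟩
      show (1/t) • a ∈ D ∩ Bᶜ
      rw [← htb, smul_smul, one_div_mul_cancel ht.ne', one_smul]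
      simpa using hmemb 1 le_rfl
    · intro y hy hyO r hρr
      obtain ⟨t, ht, htC⟩ := hyO
      have hyD : y ∈ D := by
        have h2 := hD (t • y) htC.1 (1/t) (by positivity)
        rwa [smul_smul, one_div_mul_cancel ht.ne', one_smul] at h2
      have hr0 : (0:ℝ) < r := lt_of_lt_of_le (lt_of_lt_of_le one_pos (le_max_right ρ₀ 1)) hρr
      refine ⟨hD y hyD r hr0, fun hmem => ?_⟩
      have h1 := hBρ hmem
      rw [Metric.mem_ball, dist_zero_right, norm_smul, Real.norm_of_nonneg hr0.le, hy,
        mul_one] at h1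
      have h2 : ρ₀ ≤ r := le_trans (le_max_left _ _) hρr
      linarith
    · intro x hx z hz
      calc dist (u x) (u z) ≤ dist (u x) (v (Sum.inr (rayOfNeZero ℝ a ha)))
            + dist (u z) (v (Sum.inr (rayOfNeZero ℝ a ha))) := dist_triangle_right _ _ _
      _ ≤ ε/3 + ε/3 := add_le_add (hest x hx) (hest z hz)
      _ = 2*(ε/3) := by ring
  choose Cf ρf hρf hCo hCmem hCkey hCosc using hgood
  set O : Metric.sphere (0:X) 1 → Set X := fun i =>
    ⋃ t ∈ Set.Ioi (0:ℝ), (fun y : X => t • y) ⁻¹' (Cf i) with hOdef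
  have hOopen : ∀ i, IsOpen (O i) := fun i =>
    isOpen_biUnion fun t _ => (hCo i).preimage (continuous_const_smul t)
  have hOmem : ∀ (i) (y : X), y ∈ O i ↔ ∃ t : ℝ, 0 < t ∧ t • y ∈ Cf i := by
    intro i y
    simp [hOdef]
  have hcover : (Metric.sphere (0:X) 1 : Set X) ⊆ ⋃ i, O i := fun a hamem =>
    mem_iUnion.2 ⟨⟨a, hamem⟩, (hOmem _ _).2 (hCmem ⟨a, hamem⟩)⟩
  obtain ⟨s, hs⟩ := (isCompact_sphere (0:X) 1).elim_finite_subcover O hOopen hcover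
  classical
  set R₀ : ℝ := (insert (0:ℝ) (s.image ρf)).max' (Finset.insert_nonempty _ _) with hR₀def
  set R : ℝ := max 1 R₀ with hRdef
  have hR1 : (1:ℝ) ≤ R := le_max_left _ _
  have hR0 : (0:ℝ) < R := lt_of_lt_of_le one_pos hR1
  have hρR : ∀ i ∈ s, ρf i ≤ R := fun i hi =>
    le_trans (Finset.le_max' _ _ (Finset.mem_insert_of_mem (Finset.mem_image_of_mem ρf hi)))
      (le_max_right 1 R₀)
  have hmaxne : ∀ x : X, max R ‖x‖ ≠ 0 := fun x =>
    (lt_of_lt_of_le hR0 (le_max_left _ _)).ne'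
  have hscont : Continuous (fun x : X => u ((R / max R ‖x‖) • x)) :=
    u.continuous.comp ((continuous_const.div (continuous_const.max continuous_norm)
      hmaxne).smul continuous_id)
  set hb : X →ᵇ ℂ := ⟨⟨fun x => u ((R / max R ‖x‖) • x), hscont⟩,
    ⟨2*‖u‖, fun p q => by
      calc dist (u ((R / max R ‖p‖) • p)) (u ((R / max R ‖q‖) • q))
          ≤ ‖u ((R / max R ‖p‖) • p)‖ + ‖u ((R / max R ‖q‖) • q)‖ := dist_le_norm_add_norm _ _
      _ ≤ ‖u‖ + ‖u‖ := add_le_add (u.norm_coe_le_norm _) (u.norm_coe_le_norm _)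
      _ = 2*‖u‖ := by ring⟩⟩ with hbdef
  have hbeval : ∀ x : X, hb x = u ((R / max R ‖x‖) • x) := fun x => rfl
  have hbHomog : hb ∈ HomogSet X := by
    refine ⟨Metric.closedBall 0 R, isCompact_closedBall _ _, ?_⟩
    intro x hx r hr
    rw [Metric.mem_closedBall, dist_zero_right, not_le] at hx
    have hr0 : (0:ℝ) < r := lt_of_lt_of_le one_pos hr
    have hnx : (0:ℝ) < ‖x‖ := lt_trans hR0 hx
    have hnrx : ‖r • x‖ = r * ‖x‖ := by
      rw [norm_smul, Real.norm_of_nonneg hr0.le]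
    have hm1 : max R ‖r • x‖ = r * ‖x‖ := by
      rw [hnrx]
      exact max_eq_right (by nlinarith)
    have hm2 : max R ‖x‖ = ‖x‖ := max_eq_right hx.le
    rw [hbeval, hbeval, hm1, hm2, smul_smul]
    congr 2
    field_simp
  have hdist : ∀ x : X, dist (u x) (hb x) ≤ 2*(ε/3) := by
    intro x
    rcases le_or_gt ‖x‖ R with h | h
    · have hm : max R ‖x‖ = R := max_eq_left h
      rw [hbeval, hm, div_self hR0.ne', one_smul]
      simp
      positivity
    · have hnx : (0:ℝ) < ‖x‖ := lt_trans hR0 h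
      set y : X := ‖x‖⁻¹ • x with hydef
      have hny : ‖y‖ = 1 := by
        rw [hydef, norm_smul, Real.norm_of_nonneg (inv_nonneg.2 hnx.le),
          inv_mul_cancel₀ hnx.ne']
      have hymem : y ∈ Metric.sphere (0:X) 1 := mem_sphere_zero_iff_norm.2 hny
      obtain ⟨i, his, hyO⟩ := mem_iUnion₂.1 (hs hymem)
      have hyO' : ∃ t : ℝ, 0 < t ∧ t • y ∈ Cf i := (hOmem i y).1 hyO
      have hxy : ‖x‖ • y = x := by
        rw [hydef, smul_smul, mul_inv_cancel₀ hnx.ne', one_smul]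
      have hx' : x ∈ Cf i := by
        have := hCkey i y hny hyO' ‖x‖ (le_trans (hρR i his) h.le)
        rwa [hxy] at this
      have hz : R • y ∈ Cf i := hCkey i y hny hyO' R (hρR i his)
      have hbx : hb x = u (R • y) := by
        rw [hbeval, max_eq_right h.le, hydef, smul_smul, div_eq_mul_inv]
      rw [hbx]
      exact hCosc i x hx' (R • y) hz
  refine ⟨hb, hbHomog, ?_⟩
  have h1 : dist u hb ≤ 2*(ε/3) :=
    (BoundedContinuousFunction.dist_le (by linarith)).2 hdist
  linarith
end PartC


/-- `C(X̄)`, viewed inside `C_b(X)` by restriction, is the sup-norm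
closure of the algebra `C_h(X)` of continuous functions homogeneous of degree
zero outside a compact set. -/
theorem statement3 {X : Type*} [NormedAddCommGroup X] [NormedSpace ℝ X]
    [FiniteDimensional ℝ X] :
    SphContSet X = closure (HomogSet X) :=
  Set.Subset.antisymm sphCont_subset_closure
    (closure_minimal homog_subset_sphCont isClosed_sphCont)
end
end

section
/- Let X = ℝ^d with Lebesgue measure, ξ a translation invariant coarse filter on X, Λ a compact neighborhood of 0, and u : X → ℂ a bounded uniformly continuous function. Then lim_ξ u = 0 if and only if lim_{a→ξ} ∫_{a+Λ} |u(x)| dx = 0. -/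
open Filter Topology Set MeasureTheory Bornology BoundedContinuousFunction

noncomputable section

/-- A translation invariant filter. -/
def TransInvFilter {X : Type*} [Add X] (ξ : Filter X) : Prop :=
  ∀ F ∈ ξ, ∀ x : X, (fun y => x + y) '' F ∈ ξ

/-- A coarse filter. -/
def CoarseFilter {X : Type*} [Add X] [TopologicalSpace X] (ξ : Filter X) : Prop :=
  ∀ F ∈ ξ, ∀ K : Set X, IsCompact K → ∃ G ∈ ξ, ∀ g ∈ G, ∀ k ∈ K, g + k ∈ F

/-- for a translation invariant coarse filter `ξ`, a compact
neighborhood `Λ` of `0` and a bounded uniformly continuous `u`, one has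
`lim_ξ u = 0` iff `lim_{a→ξ} ∫_{a+Λ} |u| = 0`. -/
theorem statement6 {d : ℕ} (ξ : Filter (EuclideanSpace ℝ (Fin d)))
    (hinv : TransInvFilter ξ) (hco : CoarseFilter ξ)
    (Λ : Set (EuclideanSpace ℝ (Fin d))) (hΛc : IsCompact Λ)
    (hΛn : Λ ∈ nhds (0 : EuclideanSpace ℝ (Fin d)))
    (u : EuclideanSpace ℝ (Fin d) → ℂ) (hu : UniformContinuous u)
    (hb : ∃ M : ℝ, ∀ x, ‖u x‖ ≤ M) :
    Filter.Tendsto u ξ (nhds 0) ↔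
      Filter.Tendsto (fun a => ∫ x in (fun y => a + y) '' Λ, ‖u x‖) ξ (nhds 0) := by
  obtain ⟨M, hM⟩ := hb
  have hcont : Continuous u := hu.continuous
  have himg : ∀ a : EuclideanSpace ℝ (Fin d), IsCompact ((fun y => a + y) '' Λ) :=
    fun a => hΛc.image (continuous_const.add continuous_id)
  have himgeq : ∀ a : EuclideanSpace ℝ (Fin d),
      (fun y => a + y) '' Λ = (fun y => -a + y) ⁻¹' Λ := by
    intro a
    ext x
    constructor
    · rintro ⟨y, hy, rfl⟩; simpa using hy
    · intro hx; exact ⟨-a + x, hx, add_neg_cancel_left a x⟩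
  have hmeas : ∀ a : EuclideanSpace ℝ (Fin d),
      volume ((fun y => a + y) '' Λ) = volume Λ := by
    intro a; rw [himgeq a, measure_preimage_add]
  have hint : ∀ a, IntegrableOn (fun x => ‖u x‖) ((fun y => a + y) '' Λ) volume :=
    fun a => (hcont.norm.continuousOn).integrableOn_compact (himg a)
  constructor
  · intro h
    rw [Metric.tendsto_nhds] at h ⊢
    intro ε hε
    set m := (volume Λ).toReal + 1 with hmdef
    have hm : 0 < m := by
      have : 0 ≤ (volume Λ).toReal := ENNReal.toReal_nonneg
      linarith
    have hF : {a | dist (u a) 0 < ε / m} ∈ ξ := h (ε / m) (by positivity)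
    obtain ⟨G, hG, hGF⟩ := hco _ hF Λ hΛc
    filter_upwards [hG] with a ha
    have hbound : ∀ x ∈ (fun y => a + y) '' Λ, ‖‖u x‖‖ ≤ ε / m := by
      rintro x ⟨y, hy, rfl⟩
      have := hGF a ha y hy
      simp only [Set.mem_setOf_eq, dist_zero_right] at this
      rw [Real.norm_of_nonneg (norm_nonneg _)]
      exact this.le
    have hfin : volume ((fun y => a + y) '' Λ) < ⊤ := (himg a).measure_lt_top
    have := MeasureTheory.norm_setIntegral_le_of_norm_le_const hfin hbound
    rw [dist_zero_right]
    calc ‖∫ x in (fun y => a + y) '' Λ, ‖u x‖‖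
        ≤ ε / m * (volume ((fun y => a + y) '' Λ)).toReal := this
      _ = ε / m * (volume Λ).toReal := by rw [hmeas a]
      _ < ε := by
          rw [div_mul_eq_mul_div, div_lt_iff₀ hm]
          have h1 : (volume Λ).toReal < m := by rw [hmdef]; linarith
          have : ε * (volume Λ).toReal ≤ ε * m := by nlinarith
          nlinarith
  · intro h
    rw [Metric.tendsto_nhds] at h ⊢
    intro ε hε
    obtain ⟨δ, hδ, hδu⟩ := Metric.uniformContinuous_iff.mp hu (ε / 2) (by positivity)
    obtain ⟨ρ, hρ, hρΛ⟩ := Metric.mem_nhds_iff.mp hΛn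
    set ρ' := min ρ (δ / 2) with hρ'def
    have hρ' : 0 < ρ' := lt_min hρ (by positivity)
    have hballΛ : Metric.ball (0 : EuclideanSpace ℝ (Fin d)) ρ' ⊆ Λ :=
      (Metric.ball_subset_ball (min_le_left _ _)).trans hρΛ
    have hvolpos : 0 < (volume (Metric.ball (0 : EuclideanSpace ℝ (Fin d)) ρ')).toReal := by
      refine ENNReal.toReal_pos (Metric.measure_ball_pos volume 0 hρ').ne' ?_
      exact measure_ball_lt_top.ne
    set c := ε / 2 * (volume (Metric.ball (0 : EuclideanSpace ℝ (Fin d)) ρ')).toReal with hcdef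
    have hc : 0 < c := by positivity
    filter_upwards [h c hc] with a ha
    rw [dist_zero_right] at ha ⊢
    by_contra hcon
    push_neg at hcon
    -- ε ≤ ‖u a‖
    have hsub : Metric.ball a ρ' ⊆ (fun y => a + y) '' Λ := by
      intro x hx
      refine ⟨x - a, hballΛ ?_, by show a + (x - a) = x; rw [add_comm]; exact sub_add_cancel x a⟩
      rw [Metric.mem_ball, dist_zero_right]
      rw [Metric.mem_ball, dist_eq_norm] at hx
      simpa using hx
    have hlow : ∀ x ∈ Metric.ball a ρ', ε / 2 ≤ ‖u x‖ := by
      intro x hx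
      have hdx : dist x a < δ := lt_of_lt_of_le (Metric.mem_ball.mp hx)
        ((min_le_right _ _).trans (by linarith))
      have hux : dist (u x) (u a) < ε / 2 := hδu hdx
      have : ‖u a‖ - ‖u x‖ ≤ dist (u x) (u a) := by
        rw [dist_comm, dist_eq_norm]
        exact (norm_sub_norm_le _ _).trans (le_refl _)
      linarith
    have hballmeas : volume (Metric.ball a ρ') =
        volume (Metric.ball (0 : EuclideanSpace ℝ (Fin d)) ρ') :=
      MeasureTheory.Measure.addHaar_ball_center volume a ρ'
    have hintball : IntegrableOn (fun x => ‖u x‖) (Metric.ball a ρ') volume :=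
      (hint a).mono_set hsub
    have h1 : c ≤ ∫ x in Metric.ball a ρ', ‖u x‖ := by
      have hconst : ∫ x in Metric.ball a ρ', (ε / 2) =
          ε / 2 * (volume (Metric.ball a ρ')).toReal := by
        rw [MeasureTheory.setIntegral_const, smul_eq_mul, mul_comm]; rfl
      calc c = ε / 2 * (volume (Metric.ball a ρ')).toReal := by rw [hballmeas]
        _ = ∫ x in Metric.ball a ρ', (ε / 2) := hconst.symm
        _ ≤ ∫ x in Metric.ball a ρ', ‖u x‖ := by
            refine MeasureTheory.setIntegral_mono_on
              ((integrableOn_const_iff enorm_ne_top).mpr (Or.inr measure_ball_lt_top))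
              hintball measurableSet_ball hlow
    have h2 : ∫ x in Metric.ball a ρ', ‖u x‖ ≤ ∫ x in (fun y => a + y) '' Λ, ‖u x‖ := by
      refine MeasureTheory.setIntegral_mono_set (hint a) ?_ (HasSubset.Subset.eventuallyLE hsub)
      exact Filter.Eventually.of_forall fun x => norm_nonneg _
    have h3 : ∫ x in (fun y => a + y) '' Λ, ‖u x‖ ≤ ‖∫ x in (fun y => a + y) '' Λ, ‖u x‖‖ :=
      le_abs_self _
    linarith
end
end

section
/- Let X be a finite-dimensional real vector space and ℰ(X) the C*-subalgebra of C_b^u(X) generated by ∪_Y C(overline{X/Y}) over all linear subspaces Y ⊂ X. For every α ∈ 𝕊_X and u ∈ ℰ(X), the limit τ_α(u)(x) := lim_{r→+∞} u(ra + x) exists for all x ∈ X, is independent of the choice of a ∈ α, and τ_α(u) ∈ ℰ(X). Moreover τ_α : ℰ(X) → ℰ(X) is a *-algebra morphism whose range is ℰ(X/[α]) and which restricts to the identity on ℰ(X/[α]). -/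
open Filter Topology Set MeasureTheory Bornology BoundedContinuousFunction

noncomputable section

section Algebras
variable (X : Type*) [NormedAddCommGroup X] [NormedSpace ℝ X]

/-- Generators `u ∘ π_Z`, `u ∈ C(overline{X/Z})`, over all subspaces `Z ⊇ Y`. -/
def QGenSet (Y : Submodule ℝ X) : Set (X →ᵇ ℂ) :=
  {u | ∃ Z : Submodule ℝ X, Y ≤ Z ∧ ∃ v : C(SphComp (X ⧸ Z), ℂ),
      ∀ x : X, u x = v (Sum.inl (Submodule.Quotient.mk x))}

/-- The C*-algebra `ℰ(X/Y)`, realized inside the bounded continuous functions on `X`. -/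
def EAlgY (Y : Submodule ℝ X) : StarSubalgebra ℂ (X →ᵇ ℂ) :=
  (StarAlgebra.adjoin ℂ (QGenSet X Y)).topologicalClosure

/-- The C*-algebra `ℰ(X)` of elementary interactions. -/
abbrev EAlg : StarSubalgebra ℂ (X →ᵇ ℂ) := EAlgY X ⊥

end Algebras

lemma tendsto_inl_sphComp {V : Type*} [SeminormedAddCommGroup V] [NormedSpace ℝ V]
    {b : V} (hb : 0 < ‖b‖) (x : V) :
    Tendsto (fun r : ℝ => (Sum.inl (r • b + x) : SphComp V)) atTop
      (@nhds (SphComp V) _ (Sum.inr (rayOfNeZero ℝ b (fun h => by simp [h] at hb)))) := by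
  have hb0 : b ≠ 0 := fun h => by simp [h] at hb
  refine TopologicalSpace.tendsto_nhds_generateFrom_iff.mpr ?_
  rintro s (⟨O, hO, rfl⟩ | ⟨C, hCopen, hTC, rfl⟩) hmem
  · exact absurd hmem (by simp)
  · obtain ⟨D, B, hD, hB, rfl⟩ := hTC
    rcases hmem with ⟨y, _, hy⟩ | ⟨α, hα, hy⟩
    · exact absurd hy (by simp)
    have hαeq : α = rayOfNeZero ℝ b hb0 := by
      simpa using hy
    rw [hαeq] at hα
    obtain ⟨a', ha', heq, hray⟩ := hα
    have hsr : SameRay ℝ a' b := (ray_eq_iff ha' hb0).mp heq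
    obtain ⟨r₁, r₂, hr₁, hr₂, hkey⟩ := hsr.exists_pos ha' hb0
    set t : ℝ := r₂ / r₁ with ht_def
    have ht : 0 < t := div_pos hr₂ hr₁
    have ha't : a' = t • b := by
      rw [ht_def, div_eq_inv_mul, mul_smul, ← hkey, smul_smul, inv_mul_cancel₀ hr₁.ne', one_smul]
    have pC : a' ∈ D ∩ Bᶜ := by simpa using hray 1 le_rfl
    -- eventually in D
    have htend : Tendsto (fun r : ℝ => a' + (t / r) • x) atTop (𝓝 a') := by
      have h1 : Tendsto (fun r : ℝ => t / r) atTop (𝓝 0) :=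
        Tendsto.div_atTop tendsto_const_nhds tendsto_id
      have h2 : Tendsto (fun r : ℝ => (t / r) • x) atTop (𝓝 ((0 : ℝ) • x)) :=
        h1.smul_const x
      rw [zero_smul] at h2
      simpa using tendsto_const_nhds.add h2
    have hmemC : ∀ᶠ r : ℝ in atTop, a' + (t / r) • x ∈ D ∩ Bᶜ :=
      htend (hCopen.mem_nhds pC)
    -- eventually out of B
    obtain ⟨R, hR⟩ := hB.subset_closedBall 0
    have hinf : Tendsto (fun r : ℝ => r * ‖b‖ - ‖x‖) atTop atTop := by
      have := (tendsto_id.atTop_mul_const hb : Tendsto (fun r : ℝ => r * ‖b‖) atTop atTop)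
      simpa [sub_eq_add_neg] using tendsto_atTop_add_const_right atTop (-‖x‖) this
    have hout : ∀ᶠ r : ℝ in atTop, r • b + x ∉ B := by
      filter_upwards [hinf.eventually_gt_atTop R, eventually_ge_atTop (0:ℝ)] with r h1 h2 hmem
      have h3 : ‖r • b‖ ≤ ‖r • b + x‖ + ‖x‖ := by
        simpa using norm_add_le (r • b + x) (-x)
      have h4 : ‖r • b‖ = r * ‖b‖ := by
        rw [norm_smul, Real.norm_eq_abs, abs_of_nonneg h2]
      have h5 := hR hmem
      rw [Metric.mem_closedBall, dist_zero_right] at h5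
      linarith
    filter_upwards [hmemC, hout, eventually_gt_atTop (0:ℝ)] with r h1 h2 hr
    refine Or.inl ⟨r • b + x, ⟨?_, h2⟩, rfl⟩
    have heq2 : (r / t) • (a' + (t / r) • x) = r • b + x := by
      rw [ha't, smul_add, smul_smul, smul_smul, div_mul_cancel₀ _ (ne_of_gt ht),
        div_mul_div_comm, mul_comm, div_self (by positivity), one_smul]
    rw [← heq2]
    exact hD _ h1.1 (r / t) (by positivity)

section Proof11
variable {X : Type*} [NormedAddCommGroup X] [NormedSpace ℝ X]

lemma norm_mk_pos [FiniteDimensional ℝ X] {Z : Submodule ℝ X} {a : X} (h : a ∉ Z) :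
    0 < ‖(Submodule.Quotient.mk a : X ⧸ Z)‖ := by
  rcases (norm_nonneg (Submodule.Quotient.mk a : X ⧸ Z)).lt_or_eq with h' | h'
  · exact h'
  · have hcl : IsClosed (Z.toAddSubgroup : Set X) := Z.closed_of_finiteDimensional
    exact absurd ((QuotientAddGroup.norm_mk_eq_zero (S := Z.toAddSubgroup) (m := a)).mp h'.symm) h

/-- The limit predicate. -/
def LimP (a : X) (w g : X →ᵇ ℂ) : Prop :=
  ∀ x : X, Tendsto (fun r : ℝ => w (r • a + x)) atTop (𝓝 (g x))

lemma LimP.unique {a : X} {w g g' : X →ᵇ ℂ} (h : LimP a w g) (h' : LimP a w g') : g = g' := by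
  ext x
  exact tendsto_nhds_unique (h x) (h' x)

lemma mem_EAlgY_of_gen {Y : Submodule ℝ X} {w : X →ᵇ ℂ} (hw : w ∈ QGenSet X Y) :
    w ∈ EAlgY X Y :=
  (StarSubalgebra.le_topologicalClosure _) (StarAlgebra.subset_adjoin ℂ _ hw)

lemma const_mem_EAlgY (Y : Submodule ℝ X) (c : ℂ) :
    BoundedContinuousFunction.const X c ∈ EAlgY X Y := by
  refine mem_EAlgY_of_gen ⟨⊤, le_top, ContinuousMap.const _ c, fun x => rfl⟩

lemma gen_lim [FiniteDimensional ℝ X] (a : X) {w : X →ᵇ ℂ} (hw : w ∈ QGenSet X ⊥) :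
    ∃ g : X →ᵇ ℂ, g ∈ EAlgY X (Submodule.span ℝ {a}) ∧ LimP a w g := by
  obtain ⟨Z, -, v, hv⟩ := hw
  by_cases haZ : a ∈ Z
  · refine ⟨w, mem_EAlgY_of_gen ⟨Z, by rwa [Submodule.span_singleton_le_iff_mem], v, hv⟩, ?_⟩
    intro x
    have hkey : ∀ r : ℝ, w (r • a + x) = w x := by
      intro r
      rw [hv, hv x]
      congr 1
      refine congrArg Sum.inl ?_
      rw [Submodule.Quotient.eq]
      simpa using Z.smul_mem r haZ
    simp only [hkey]
    exact tendsto_const_nhds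
  · have hb : 0 < ‖(Submodule.Quotient.mk a : X ⧸ Z)‖ := norm_mk_pos haZ
    refine ⟨BoundedContinuousFunction.const X
      (v (Sum.inr (rayOfNeZero ℝ (Submodule.Quotient.mk a : X ⧸ Z) (fun h => by rw [h] at hb; simp at hb)))),
      const_mem_EAlgY _ _, fun x => ?_⟩
    have hkey : ∀ r : ℝ, w (r • a + x)
        = v (Sum.inl (r • (Submodule.Quotient.mk a : X ⧸ Z) + Submodule.Quotient.mk x)) := by
      intro r
      rw [hv]
      have h2 : (Submodule.Quotient.mk (r • a + x) : X ⧸ Z)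
          = r • Submodule.Quotient.mk a + Submodule.Quotient.mk x := by
        rw [← Z.mkQ_apply, map_add, _root_.map_smul, Z.mkQ_apply, Z.mkQ_apply]
      rw [h2]
    simp only [hkey]
    exact (v.continuous.tendsto _).comp (tendsto_inl_sphComp hb (Submodule.Quotient.mk x))


lemma LimP.add {a : X} {w w' g g' : X →ᵇ ℂ} (h : LimP a w g) (h' : LimP a w' g') :
    LimP a (w + w') (g + g') := fun x => by
  simp only [BoundedContinuousFunction.coe_add, Pi.add_apply]
  exact (h x).add (h' x)

lemma LimP.mul {a : X} {w w' g g' : X →ᵇ ℂ} (h : LimP a w g) (h' : LimP a w' g') :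
    LimP a (w * w') (g * g') := fun x => by
  simp only [BoundedContinuousFunction.coe_mul, Pi.mul_apply]
  exact (h x).mul (h' x)

lemma LimP.star {a : X} {w g : X →ᵇ ℂ} (h : LimP a w g) :
    LimP a (star w) (star g) := fun x => by
  simp only [BoundedContinuousFunction.coe_star, Pi.star_apply]
  exact (h x).star

lemma LimP.algebraMap (a : X) (c : ℂ) :
    LimP a (algebraMap ℂ (X →ᵇ ℂ) c) (algebraMap ℂ (X →ᵇ ℂ) c) := fun x => by
  simp only [BoundedContinuousFunction.algebraMap_apply]
  exact tendsto_const_nhds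

/-- The set of `w` having a limit function lying in `ℰ(X/[a])`. -/
def limSet (a : X) : StarSubalgebra ℂ (X →ᵇ ℂ) where
  carrier := {w | ∃ g, g ∈ EAlgY X (Submodule.span ℝ {a}) ∧ LimP a w g}
  mul_mem' := by
    rintro w w' ⟨g, hg, hl⟩ ⟨g', hg', hl'⟩
    exact ⟨g * g', mul_mem hg hg', hl.mul hl'⟩
  add_mem' := by
    rintro w w' ⟨g, hg, hl⟩ ⟨g', hg', hl'⟩
    exact ⟨g + g', add_mem hg hg', hl.add hl'⟩
  algebraMap_mem' := fun c =>
    ⟨algebraMap ℂ (X →ᵇ ℂ) c, StarSubalgebra.algebraMap_mem _ c, LimP.algebraMap a c⟩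
  star_mem' := by
    rintro w ⟨g, hg, hl⟩
    exact ⟨star g, star_mem hg, hl.star⟩

/-- The set of `w` fixed in the limit. -/
def fixSet (a : X) : StarSubalgebra ℂ (X →ᵇ ℂ) where
  carrier := {w | LimP a w w}
  mul_mem' := fun h h' => h.mul h'
  add_mem' := fun h h' => h.add h'
  algebraMap_mem' := fun c => LimP.algebraMap a c
  star_mem' := fun h => h.star

lemma dist_lim_le {a : X} {w w' g g' : X →ᵇ ℂ} (h : LimP a w g) (h' : LimP a w' g') :
    dist g g' ≤ dist w w' := by
  rw [BoundedContinuousFunction.dist_le dist_nonneg]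
  intro x
  have h1 : Tendsto (fun r : ℝ => dist (w (r • a + x)) (w' (r • a + x))) atTop
      (𝓝 (dist (g x) (g' x))) := (h x).dist (h' x)
  exact le_of_tendsto h1 (Eventually.of_forall fun r =>
    BoundedContinuousFunction.dist_coe_le_dist _)

lemma limP_of_tendsto {a : X} {f : ℕ → X →ᵇ ℂ} {g : ℕ → X →ᵇ ℂ} {w G : X →ᵇ ℂ}
    (hl : ∀ n, LimP a (f n) (g n)) (hfw : Tendsto f atTop (𝓝 w))
    (hG : Tendsto g atTop (𝓝 G)) : LimP a w G := by
  intro x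
  rw [Metric.tendsto_atTop]
  intro ε hε
  obtain ⟨N1, hN1⟩ := Metric.tendsto_atTop.mp hfw (ε / 3) (by positivity)
  obtain ⟨N2, hN2⟩ := Metric.tendsto_atTop.mp hG (ε / 3) (by positivity)
  set n := max N1 N2
  obtain ⟨r₀, hr₀⟩ := Metric.tendsto_atTop.mp (hl n x) (ε / 3) (by positivity)
  refine ⟨r₀, fun r hr => ?_⟩
  have d1 : dist (w (r • a + x)) (f n (r • a + x)) ≤ dist w (f n) :=
    BoundedContinuousFunction.dist_coe_le_dist _
  have d3 : dist (g n x) (G x) ≤ dist (g n) G :=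
    BoundedContinuousFunction.dist_coe_le_dist _
  have e1 : dist w (f n) < ε / 3 := by
    rw [dist_comm]; exact hN1 n (le_max_left _ _)
  have e3 : dist (g n) G < ε / 3 := hN2 n (le_max_right _ _)
  calc dist (w (r • a + x)) (G x)
      ≤ dist (w (r • a + x)) (f n (r • a + x)) + dist (f n (r • a + x)) (g n x)
        + dist (g n x) (G x) := dist_triangle4 _ _ _ _
    _ < ε := by
        have h2 := hr₀ r hr
        have k1 := lt_of_le_of_lt d1 e1
        have k3 := lt_of_le_of_lt d3 e3
        linarith
  
set_option synthInstance.maxHeartbeats 1000000 in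
lemma limSet_isClosed (a : X) : IsClosed (limSet a : Set (X →ᵇ ℂ)) := by
  refine IsSeqClosed.isClosed ?_
  intro f w hf hfw
  choose g hg hl using hf
  have hcauchy : CauchySeq g := by
    rw [Metric.cauchySeq_iff]
    intro ε hε
    obtain ⟨N, hN⟩ := Metric.cauchySeq_iff.mp hfw.cauchySeq ε hε
    exact ⟨N, fun m hm n hn => lt_of_le_of_lt (dist_lim_le (hl m) (hl n)) (hN m hm n hn)⟩
  obtain ⟨G, hG⟩ := cauchySeq_tendsto_of_complete hcauchy
  refine ⟨G, ?_, limP_of_tendsto hl hfw hG⟩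
  have hcl : IsClosed (EAlgY X (Submodule.span ℝ {a}) : Set (X →ᵇ ℂ)) :=
    StarSubalgebra.isClosed_topologicalClosure _
  exact hcl.mem_of_tendsto hG (Eventually.of_forall hg)

lemma EAlgY_le_EAlg (Y : Submodule ℝ X) : EAlgY X Y ≤ EAlg X := by
  refine StarSubalgebra.topologicalClosure_minimal ?_
    (StarSubalgebra.isClosed_topologicalClosure _)
  refine StarAlgebra.adjoin_le ?_
  rintro w ⟨Z, _, v, hv⟩
  exact mem_EAlgY_of_gen ⟨Z, bot_le, v, hv⟩

lemma EAlg_le_limSet [FiniteDimensional ℝ X] (a : X) : EAlg X ≤ limSet a :=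
  StarSubalgebra.topologicalClosure_minimal
    (StarAlgebra.adjoin_le fun _ hw => gen_lim a hw) (limSet_isClosed a)

set_option synthInstance.maxHeartbeats 1000000 in
lemma fixSet_isClosed (a : X) : IsClosed (fixSet a : Set (X →ᵇ ℂ)) := by
  refine IsSeqClosed.isClosed ?_
  intro f w hf hfw
  exact limP_of_tendsto hf hfw hfw


lemma EAlgY_span_le_fixSet (a : X) : EAlgY X (Submodule.span ℝ {a}) ≤ fixSet a := by
  refine StarSubalgebra.topologicalClosure_minimal ?_ (fixSet_isClosed a)
  refine StarAlgebra.adjoin_le ?_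
  rintro w ⟨Z, hZ, v, hv⟩
  have haZ : a ∈ Z := by rw [← Submodule.span_singleton_le_iff_mem]; exact hZ
  intro x
  have hkey : ∀ r : ℝ, w (r • a + x) = w x := by
    intro r
    rw [hv, hv x]
    congr 1
    refine congrArg Sum.inl ?_
    rw [Submodule.Quotient.eq]
    simpa using Z.smul_mem r haZ
  simp only [hkey]
  exact tendsto_const_nhds

end Proof11

/-- for every half-line (directed by `a ≠ 0`) and every
`u ∈ ℰ(X)`, the limit `τ_α(u)(x) = lim_{r→∞} u (r•a + x)` exists for all `x`,
is independent of the representative of the half-line, and belongs to `ℰ(X)`;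
`τ_α` is a *-morphism of `ℰ(X)` with range `ℰ(X/[α])`, restricting to the
identity on `ℰ(X/[α])`. -/
theorem statement11 {X : Type*} [NormedAddCommGroup X] [NormedSpace ℝ X]
    [FiniteDimensional ℝ X] (a : X) (ha : a ≠ 0) :
    ∃ T : (EAlg X) →⋆ₐ[ℂ] (X →ᵇ ℂ),
      (∀ u : EAlg X, ∀ x : X, ∀ s : ℝ, 0 < s →
        Filter.Tendsto (fun r : ℝ => (u : X →ᵇ ℂ) (r • (s • a) + x)) Filter.atTop
          (nhds (T u x))) ∧
      (∀ u : EAlg X, T u ∈ EAlgY X (Submodule.span ℝ {a})) ∧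
      (∀ u : EAlg X, T u ∈ EAlg X) ∧
      (∀ u : EAlg X, (u : X →ᵇ ℂ) ∈ EAlgY X (Submodule.span ℝ {a}) → T u = (u : X →ᵇ ℂ)) ∧
      (∀ w : X →ᵇ ℂ, w ∈ EAlgY X (Submodule.span ℝ {a}) → ∃ u : EAlg X, T u = w) := by
  have hex : ∀ u : EAlg X, ∃ g : X →ᵇ ℂ,
      g ∈ EAlgY X (Submodule.span ℝ {a}) ∧ LimP a (u : X →ᵇ ℂ) g :=
    fun u => EAlg_le_limSet a u.2
  choose g hg hglim using hex
  have huniq : ∀ (u : EAlg X) (g' : X →ᵇ ℂ), LimP a (u : X →ᵇ ℂ) g' → g u = g' :=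
    fun u g' h => (hglim u).unique h
  refine ⟨{ toFun := g
            map_one' := huniq 1 1 (fun x => by simpa using tendsto_const_nhds)
            map_mul' := fun u v => huniq (u * v) _ ((hglim u).mul (hglim v))
            map_zero' := huniq 0 0 (fun x => by simpa using tendsto_const_nhds)
            map_add' := fun u v => huniq (u + v) _ ((hglim u).add (hglim v))
            commutes' := fun c => huniq _ _ (LimP.algebraMap a c)
            map_star' := fun u => huniq _ _ (hglim u).star }, ?_, ?_, ?_, ?_, ?_⟩
  · intro u x s hs
    have hcomp := (hglim u x).comp (tendsto_id.atTop_mul_const hs)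
    simpa [Function.comp_def, mul_smul] using hcomp
  · exact hg
  · exact fun u => EAlgY_le_EAlg (Submodule.span ℝ {a}) (hg u)
  · exact fun u hu => huniq u _ (EAlgY_span_le_fixSet a hu)
  · exact fun w hw => ⟨⟨w, EAlgY_le_EAlg _ hw⟩, huniq _ _ (EAlgY_span_le_fixSet a hw)⟩
end
end

section
/- With ℰ(X) and ℰ(X/Y) as above, ℰ(X/Y) = {u ∈ ℰ(X) : u(x + y) = u(x) for all x ∈ X, y ∈ Y} = ℰ(X) ∩ C_b^u(X/Y). -/
open Filter Topology Set MeasureTheory Bornology BoundedContinuousFunction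

noncomputable section

section ConeLemmas

variable {W : Type*} [SeminormedAddCommGroup W] [Module ℝ W] [IsBoundedSMul ℝ W]

theorem norm_smul_pos {r : ℝ} (hr : 0 < r) (x : W) : ‖r • x‖ = r * ‖x‖ := by
  refine le_antisymm (by simpa [Real.norm_eq_abs, abs_of_pos hr] using norm_smul_le r x) ?_
  have h := norm_smul_le r⁻¹ (r • x)
  rw [inv_smul_smul₀ hr.ne', Real.norm_eq_abs, abs_of_pos (inv_pos.mpr hr)] at h
  have := mul_le_mul_of_nonneg_left h hr.le
  rwa [← mul_assoc, mul_inv_cancel₀ hr.ne', one_mul] at this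

omit [IsBoundedSMul ℝ W] in
theorem exists_cone_of_isOpen_s13 {a : W} (ha : a ≠ 0) {U : Set (SphComp W)} (hU : IsOpen U)
    (hmem : Sum.inr (rayOfNeZero ℝ a ha) ∈ U) :
    ∃ (C D B : Set W) (t : ℝ), IsOpen C ∧ C = D ∩ Bᶜ ∧ IsCone D ∧ Bornology.IsBounded B ∧
      0 < t ∧ (∀ s : ℝ, t ≤ s → s • a ∈ C) ∧ ∀ ξ ∈ C, (Sum.inl ξ : SphComp W) ∈ U := by
  have hU' : TopologicalSpace.GenerateOpen
      ({s | ∃ O : Set W, IsOpen O ∧ s = Sum.inl '' O} ∪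
       {s | ∃ C : Set W, IsOpen C ∧ IsTruncCone C ∧
          s = Sum.inl '' C ∪ Sum.inr '' {α : Module.Ray ℝ W | RayEvIn α C}}) U := hU
  clear hU
  induction hU' with
  | @basic s hs =>
    rcases hs with ⟨O, _, rfl⟩ | ⟨C, hCo, ⟨D, B, hD, hB, hCeq⟩, rfl⟩
    · exact absurd hmem (by rintro ⟨_, _, h⟩; exact Sum.inl_ne_inr h)
    · have hray : RayEvIn (rayOfNeZero ℝ a ha) C := by
        rcases hmem with ⟨ξ, _, h⟩ | ⟨α, hα, h⟩
        · simp at h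
        · rw [Sum.inr.injEq] at h
          exact h ▸ hα
      obtain ⟨a', ha', hra, hin⟩ := hray
      obtain ⟨c, hc, hca⟩ := ((ray_eq_iff ha' ha).mp hra).exists_pos_left ha' ha
      refine ⟨C, D, B, c⁻¹, hCo, hCeq, hD, hB, inv_pos.mpr hc, fun s hs => ?_,
        fun ξ hξ => Or.inl ⟨ξ, hξ, rfl⟩⟩
      have h1 : (1:ℝ) ≤ s * c := by
        rw [← inv_mul_cancel₀ hc.ne']
        exact mul_le_mul_of_nonneg_right hs hc.le
      have := hin (s * c) h1
      rwa [mul_smul, hca] at this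
  | univ =>
    exact ⟨Set.univ, Set.univ, ∅, 1, isOpen_univ, by simp, fun x _ r _ => trivial,
      Bornology.isBounded_empty, one_pos, fun _ _ => trivial, fun _ _ => trivial⟩
  | inter s₁ s₂ h₁ h₂ ih₁ ih₂ =>
    obtain ⟨C₁, D₁, B₁, t₁, hCo₁, hCe₁, hD₁, hB₁, ht₁, hta₁, hsub₁⟩ := ih₁ hmem.1
    obtain ⟨C₂, D₂, B₂, t₂, hCo₂, hCe₂, hD₂, hB₂, ht₂, hta₂, hsub₂⟩ := ih₂ hmem.2
    refine ⟨C₁ ∩ C₂, D₁ ∩ D₂, B₁ ∪ B₂, max t₁ t₂, hCo₁.inter hCo₂, ?_,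
      fun x hx r hr => ⟨hD₁ x hx.1 r hr, hD₂ x hx.2 r hr⟩, hB₁.union hB₂,
      lt_max_of_lt_left ht₁,
      fun s hs => ⟨hta₁ s (le_trans (le_max_left _ _) hs), hta₂ s (le_trans (le_max_right _ _) hs)⟩,
      fun ξ hξ => ⟨hsub₁ ξ hξ.1, hsub₂ ξ hξ.2⟩⟩
    rw [hCe₁, hCe₂]
    ext x
    simp only [Set.mem_inter_iff, Set.mem_compl_iff, Set.mem_union]
    tauto
  | sUnion S hS ih =>
    obtain ⟨s, hsS, hms⟩ := hmem
    obtain ⟨C, D, B, t, h1, h2, h3, h4, h5, h6, h7⟩ := ih s hsS hms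
    exact ⟨C, D, B, t, h1, h2, h3, h4, h5, h6, fun ξ hξ => ⟨s, hsS, h7 ξ hξ⟩⟩

/-- A truncated cone around the direction of `a` eventually absorbs `ξ + r • a`
for `ξ` in a bounded set. -/
theorem cone_absorb {a : W} (hna : 0 < ‖a‖) {C D B : Set W} {t : ℝ}
    (hCo : IsOpen C) (hCeq : C = D ∩ Bᶜ) (hD : IsCone D) (hB : Bornology.IsBounded B)
    (ht : 0 < t) (hta : ∀ s : ℝ, t ≤ s → s • a ∈ C) {M : ℝ} (hM : 0 ≤ M) :
    ∃ R : ℝ, 0 < R ∧ ∀ r : ℝ, R ≤ r → ∀ ξ : W, ‖ξ‖ ≤ M → ξ + r • a ∈ C := by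
  obtain ⟨δ, hδ, hball⟩ := Metric.isOpen_iff.mp hCo (t • a) (hta t le_rfl)
  obtain ⟨ρ₀, hρ₀⟩ := isBounded_iff_forall_norm_le.mp hB
  set ρ := max ρ₀ 0 with hρdef
  have hρ : ∀ b ∈ B, ‖b‖ ≤ ρ := fun b hb => (hρ₀ b hb).trans (le_max_left _ _)
  have hρnn : 0 ≤ ρ := le_max_right _ _
  refine ⟨max (max t (t * M / δ + 1)) ((ρ + M + 1) / ‖a‖), ?_, fun r hr ξ hξ => ?_⟩
  · exact lt_of_lt_of_le ht (le_trans (le_max_left _ _) (le_max_left _ _))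
  have hrt : t ≤ r := le_trans (le_trans (le_max_left _ _) (le_max_left _ _)) hr
  have hr0 : 0 < r := lt_of_lt_of_le ht hrt
  have hr1 : t * M / δ + 1 ≤ r := le_trans (le_trans (le_max_right _ _) (le_max_left _ _)) hr
  have hr2 : (ρ + M + 1) / ‖a‖ ≤ r := le_trans (le_max_right _ _) hr
  have hmemD : r • a + ξ ∈ D := by
    have hp : t • a + (t / r) • ξ ∈ C := by
      apply hball
      rw [Metric.mem_ball, dist_eq_norm, add_sub_cancel_left,
        norm_smul_pos (div_pos ht hr0)]
      calc t / r * ‖ξ‖ ≤ t / r * M := by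
            apply mul_le_mul_of_nonneg_left hξ (le_of_lt (div_pos ht hr0))
        _ < δ := by
            have h2 : t * M / δ < r := lt_of_lt_of_le (lt_add_one _) hr1
            rw [div_lt_iff₀ hδ] at h2
            rw [div_mul_eq_mul_div, div_lt_iff₀ hr0]
            linarith
    have hpD : t • a + (t / r) • ξ ∈ D := (hCeq ▸ hp).1
    have := hD _ hpD (r / t) (div_pos hr0 ht)
    rwa [smul_add, smul_smul, smul_smul, div_mul_cancel₀ _ ht.ne',
      div_mul_div_comm, mul_comm r t, mul_div_mul_left _ _ ht.ne',
      div_self hr0.ne', one_smul] at this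
  have hnotB : r • a + ξ ∉ B := by
    intro hmem
    have h1 : ‖r • a + ξ‖ ≤ ρ := hρ _ hmem
    have h2 : r * ‖a‖ - M ≤ ‖r • a + ξ‖ := by
      have := norm_add_le (r • a + ξ) (-ξ)
      simp only [add_neg_cancel_right, norm_neg] at this
      have h3 : ‖r • a‖ = r * ‖a‖ := norm_smul_pos hr0 a
      linarith [this, h3 ▸ this, hξ]
    have h4 : ρ + M + 1 ≤ r * ‖a‖ := by
      rw [div_le_iff₀ hna] at hr2
      linarith
    linarith
  rw [hCeq, add_comm]
  exact ⟨hmemD, hnotB⟩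

end ConeLemmas

section SphLemmas

variable {W : Type*} [SeminormedAddCommGroup W] [Module ℝ W] [IsBoundedSMul ℝ W]

/-- The canonical embedding of `W` into its spherical compactification. -/
def sphInl (w : W) : SphComp W := Sum.inl w

/-- The canonical embedding of the sphere at infinity. -/
def sphInr (α : Module.Ray ℝ W) : SphComp W := Sum.inr α

theorem gen_limit {a : W} (ha : a ≠ 0) (hna : 0 < ‖a‖) (v : C(SphComp W, ℂ))
    {ε M : ℝ} (hε : 0 < ε) (hM : 0 ≤ M) :
    ∃ R : ℝ, ∀ r : ℝ, R ≤ r → ∀ ξ : W, ‖ξ‖ ≤ M →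
      ‖v (Sum.inl (ξ + r • a)) - v (Sum.inr (rayOfNeZero ℝ a ha))‖ ≤ ε := by
  set p : SphComp W := Sum.inr (rayOfNeZero ℝ a ha) with hp
  have hUo : IsOpen (v ⁻¹' Metric.ball (v p) ε) := Metric.isOpen_ball.preimage v.continuous
  have hmem : p ∈ v ⁻¹' Metric.ball (v p) ε := by
    simp [Metric.mem_ball, hε]
  obtain ⟨C, D, B, t, hCo, hCeq, hD, hB, ht, hta, hsub⟩ := exists_cone_of_isOpen_s13 ha hUo hmem
  obtain ⟨R, _, hR⟩ := cone_absorb hna hCo hCeq hD hB ht hta hM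
  refine ⟨R, fun r hr ξ hξ => ?_⟩
  have h1 : (Sum.inl (ξ + r • a) : SphComp W) ∈ v ⁻¹' Metric.ball (v p) ε :=
    hsub _ (hR r hr ξ hξ)
  change dist (v (Sum.inl (ξ + r • a))) (v p) < ε at h1
  rw [dist_eq_norm] at h1
  exact h1.le

omit [IsBoundedSMul ℝ W] in
theorem continuous_inl_sph : Continuous (sphInl : W → SphComp W) := by
  apply continuous_generateFrom_iff.mpr
  rintro s (⟨O, hO, rfl⟩ | ⟨C, hCo, _, rfl⟩)
  · have : (sphInl : W → SphComp W) ⁻¹' (Sum.inl '' O) = O := by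
      ext w
      simp only [sphInl, Set.mem_preimage, Set.mem_image, Sum.inl.injEq]
      refine ⟨fun ⟨x, hx, hxw⟩ => ?_, fun h => ⟨w, h, rfl⟩⟩
      obtain rfl := Sum.inl_injective hxw
      exact hx
    rw [← this] at hO
    exact hO
  · have : (sphInl : W → SphComp W) ⁻¹'
        (Sum.inl '' C ∪ Sum.inr '' {α : Module.Ray ℝ W | RayEvIn α C}) = C := by
      ext w
      simp only [sphInl, Set.mem_preimage, Set.mem_union, Set.mem_image, Sum.inl.injEq,
        Set.mem_setOf_eq]
      constructor
      · rintro (⟨x, hx, hxw⟩ | ⟨α, _, h⟩)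
        · obtain rfl := Sum.inl_injective hxw
          exact hx
        · exact absurd h (by simp)
      · exact fun h => Or.inl ⟨w, h, rfl⟩
    rw [← this] at hCo
    exact hCo

theorem tendsto_inl_inr {e : W} (he : e ≠ 0) {l : Filter ℕ} {ξ : ℕ → W}
    (hnorm : Tendsto (fun n => ‖ξ n‖) l atTop)
    (hdir : Tendsto (fun n => ‖ξ n‖⁻¹ • ξ n) l (𝓝 e)) :
    Tendsto (fun n => sphInl (ξ n)) l (𝓝 (sphInr (rayOfNeZero ℝ e he))) := by
  apply TopologicalSpace.tendsto_nhds_generateFrom_iff.mpr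
  rintro s (⟨O, hO, rfl⟩ | ⟨C, hCo, ⟨D, B, hD, hB, hCeq⟩, rfl⟩) hmem
  · exact absurd hmem (by rintro ⟨_, _, h⟩; exact Sum.inl_ne_inr h)
  · have hray : RayEvIn (rayOfNeZero ℝ e he) C := by
      rcases hmem with ⟨w, _, h⟩ | ⟨α, hα, h⟩
      · simp [sphInr] at h
      · rw [show sphInr (rayOfNeZero ℝ e he) = Sum.inr (rayOfNeZero ℝ e he) from rfl,
          Sum.inr.injEq] at h
        exact h ▸ hα
    obtain ⟨a', ha', hra, hin⟩ := hray
    obtain ⟨c, hc, hca⟩ := ((ray_eq_iff ha' he).mp hra).exists_pos_left ha' he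
    have hte : ∀ s : ℝ, c⁻¹ ≤ s → s • e ∈ C := by
      intro s hs
      have h1 : (1:ℝ) ≤ s * c := by
        rw [← inv_mul_cancel₀ hc.ne']
        exact mul_le_mul_of_nonneg_right hs hc.le
      have := hin (s * c) h1
      rwa [mul_smul, hca] at this
    obtain ⟨ρ₀, hρ₀⟩ := isBounded_iff_forall_norm_le.mp hB
    set t : ℝ := c⁻¹ with htdef
    have ht : 0 < t := inv_pos.mpr hc
    have hCnb : {w : W | t • w ∈ C} ∈ 𝓝 e := by
      have : Continuous fun w : W => t • w := continuous_const_smul t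
      exact this.continuousAt.preimage_mem_nhds (hCo.mem_nhds (hte t le_rfl))
    have hev1 : ∀ᶠ n in l, t • (‖ξ n‖⁻¹ • ξ n) ∈ C := hdir hCnb
    have hev2 : ∀ᶠ n in l, max 1 (ρ₀ + 1) ≤ ‖ξ n‖ := hnorm (eventually_ge_atTop _)
    filter_upwards [hev1, hev2] with n h1 h2
    have hn1 : (1:ℝ) ≤ ‖ξ n‖ := le_trans (le_max_left _ _) h2
    have hn0 : (0:ℝ) < ‖ξ n‖ := lt_of_lt_of_le one_pos hn1
    have hmemD : ξ n ∈ D := by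
      have hp : t • (‖ξ n‖⁻¹ • ξ n) ∈ D := (hCeq ▸ h1).1
      have := hD _ hp (‖ξ n‖ / t) (div_pos hn0 ht)
      rwa [smul_smul, smul_smul, div_mul_cancel₀ _ ht.ne',
        mul_inv_cancel₀ hn0.ne', one_smul] at this
    have hnotB : ξ n ∉ B := fun hmB =>
      absurd (hρ₀ _ hmB) (by linarith [le_trans (le_max_right _ _) h2])
    exact Set.mem_preimage.mpr (Or.inl ⟨ξ n, hCeq ▸ ⟨hmemD, hnotB⟩, rfl⟩)

end SphLemmas

section QuotLemmas

theorem dir_sub_bound {W : Type*} [SeminormedAddCommGroup W] [Module ℝ W] [IsBoundedSMul ℝ W]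
    {ξ ξ' : W} (h : 1 ≤ ‖ξ‖) (h' : 1 ≤ ‖ξ'‖) :
    ‖‖ξ'‖⁻¹ • ξ' - ‖ξ‖⁻¹ • ξ‖ ≤ 2 * ‖ξ' - ξ‖ := by
  have hb : (0:ℝ) < ‖ξ‖ := lt_of_lt_of_le one_pos h
  have hb' : (0:ℝ) < ‖ξ'‖ := lt_of_lt_of_le one_pos h'
  have key : ‖ξ'‖⁻¹ • ξ' - ‖ξ‖⁻¹ • ξ = ‖ξ'‖⁻¹ • (ξ' - ξ) + (‖ξ'‖⁻¹ - ‖ξ‖⁻¹) • ξ := by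
    rw [smul_sub, sub_smul]
    abel
  rw [key]
  have h1 : ‖‖ξ'‖⁻¹ • (ξ' - ξ)‖ ≤ ‖ξ' - ξ‖ := by
    have := norm_smul_le (‖ξ'‖⁻¹) (ξ' - ξ)
    rw [Real.norm_eq_abs, abs_of_pos (inv_pos.mpr hb')] at this
    calc ‖‖ξ'‖⁻¹ • (ξ' - ξ)‖ ≤ ‖ξ'‖⁻¹ * ‖ξ' - ξ‖ := this
      _ ≤ 1 * ‖ξ' - ξ‖ := by
          apply mul_le_mul_of_nonneg_right _ (norm_nonneg _)
          exact inv_le_one_of_one_le₀ h'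
      _ = ‖ξ' - ξ‖ := one_mul _
  have h2 : ‖(‖ξ'‖⁻¹ - ‖ξ‖⁻¹) • ξ‖ ≤ ‖ξ' - ξ‖ := by
    have e2 : ‖(‖ξ'‖⁻¹ - ‖ξ‖⁻¹) • ξ‖ ≤ |‖ξ'‖⁻¹ - ‖ξ‖⁻¹| * ‖ξ‖ := by
      simpa [Real.norm_eq_abs] using norm_smul_le (‖ξ'‖⁻¹ - ‖ξ‖⁻¹) ξ
    have e1 : ‖ξ'‖⁻¹ - ‖ξ‖⁻¹ = (‖ξ‖ - ‖ξ'‖) / (‖ξ'‖ * ‖ξ‖) := inv_sub_inv hb'.ne' hb.ne'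
    have e3 : |‖ξ'‖⁻¹ - ‖ξ‖⁻¹| * ‖ξ‖ = |‖ξ‖ - ‖ξ'‖| / ‖ξ'‖ := by
      rw [e1, abs_div, abs_of_pos (mul_pos hb' hb), div_mul_eq_mul_div,
        mul_comm (|‖ξ‖ - ‖ξ'‖|) ‖ξ‖, mul_comm ‖ξ'‖ ‖ξ‖, mul_div_mul_left _ _ hb.ne']
    calc ‖(‖ξ'‖⁻¹ - ‖ξ‖⁻¹) • ξ‖ ≤ |‖ξ'‖⁻¹ - ‖ξ‖⁻¹| * ‖ξ‖ := e2
      _ = |‖ξ‖ - ‖ξ'‖| / ‖ξ'‖ := e3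
      _ ≤ |‖ξ‖ - ‖ξ'‖| := div_le_self (abs_nonneg _) h'
      _ ≤ ‖ξ - ξ'‖ := abs_norm_sub_norm_le _ _
      _ = ‖ξ' - ξ‖ := norm_sub_rev _ _
  calc ‖‖ξ'‖⁻¹ • (ξ' - ξ) + (‖ξ'‖⁻¹ - ‖ξ‖⁻¹) • ξ‖
      ≤ ‖‖ξ'‖⁻¹ • (ξ' - ξ)‖ + ‖(‖ξ'‖⁻¹ - ‖ξ‖⁻¹) • ξ‖ := norm_add_le _ _
    _ ≤ ‖ξ' - ξ‖ + ‖ξ' - ξ‖ := add_le_add h1 h2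
    _ = 2 * ‖ξ' - ξ‖ := by ring

variable {X : Type*} [NormedAddCommGroup X] [NormedSpace ℝ X] [FiniteDimensional ℝ X]
  (Z : Submodule ℝ X)

theorem lipschitz_qmk : LipschitzWith 1 (fun x : X => (Submodule.Quotient.mk x : X ⧸ Z)) := by
  apply LipschitzWith.of_dist_le_mul
  intro x y
  rw [NNReal.coe_one, one_mul, dist_eq_norm, dist_eq_norm]
  have : (Submodule.Quotient.mk x : X ⧸ Z) - Submodule.Quotient.mk y
      = Submodule.Quotient.mk (x - y) := by
    simp
  rw [this]
  exact Submodule.Quotient.norm_mk_le Z _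

theorem norm_qmk_pos {y : X} (hy : y ∉ Z) :
    0 < ‖(Submodule.Quotient.mk y : X ⧸ Z)‖ := by
  rcases lt_or_eq_of_le (norm_nonneg ((Submodule.Quotient.mk y : X ⧸ Z))) with h | h
  · exact h
  exfalso
  apply hy
  have hycl : y ∈ closure (Z : Set X) := by
    rw [Metric.mem_closure_iff]
    intro ε hε
    obtain ⟨m, hm1, hm2⟩ := Submodule.Quotient.norm_mk_lt
      ((Submodule.Quotient.mk y : X ⧸ Z)) hε
    rw [← h, zero_add] at hm2
    have hz : y - m ∈ Z := by
      have := (Submodule.Quotient.eq Z).mp hm1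
      simpa using (neg_mem this)
    exact ⟨y - m, hz, by rwa [dist_eq_norm, sub_sub_cancel]⟩
  rwa [(Submodule.closed_of_finiteDimensional Z).closure_eq] at hycl

theorem uc_gen (v : C(SphComp (X ⧸ Z), ℂ)) :
    UniformContinuous fun x : X => v (Sum.inl (Submodule.Quotient.mk x)) := by
  set f : X → ℂ := fun x => v (Sum.inl (Submodule.Quotient.mk x)) with hfdef
  have hfc : Continuous f :=
    v.continuous.comp ((continuous_inl_sph (W := X ⧸ Z)).comp (lipschitz_qmk Z).continuous)
  by_contra hun
  have key : ∃ ε > (0:ℝ), ∀ δ > (0:ℝ), ∃ a b : X, dist a b < δ ∧ ε ≤ dist (f a) (f b) := by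
    by_contra hk
    push_neg at hk
    apply hun
    rw [Metric.uniformContinuous_iff]
    intro ε hε
    obtain ⟨δ, hδ, h⟩ := hk ε hε
    exact ⟨δ, hδ, fun {a b} hab => h a b hab⟩
  obtain ⟨ε, hε, H⟩ := key
  choose x x' hdst hsep using fun n : ℕ => H (1 / (n + 1)) (by positivity)
  set ξ : ℕ → X ⧸ Z := fun n => Submodule.Quotient.mk (x n) with hξdef
  set ξ' : ℕ → X ⧸ Z := fun n => Submodule.Quotient.mk (x' n) with hξ'def
  have hd : ∀ n, ‖ξ' n - ξ n‖ ≤ 1 / (n + 1) := by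
    intro n
    have h1 : ξ' n - ξ n = Submodule.Quotient.mk (x' n - x n) := by simp [hξdef, hξ'def]
    rw [h1]
    refine le_trans (Submodule.Quotient.norm_mk_le Z _) ?_
    rw [← dist_eq_norm']
    exact (hdst n).le
  by_cases hb : ∀ M : ℝ, ∀ᶠ n in atTop, M < ‖ξ n‖
  · -- quotient norms tend to infinity
    have hsn : Tendsto (fun n => ‖ξ n‖) atTop atTop :=
      tendsto_atTop.mpr fun M => (hb M).mono fun n h => h.le
    set η : ℕ → X ⧸ Z := fun n => ‖ξ n‖⁻¹ • ξ n with hηdef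
    have hηb : ∀ n, ‖η n‖ ≤ 1 := by
      intro n
      rcases eq_or_lt_of_le (norm_nonneg (ξ n)) with h0 | h0
      · have h00 : η n = (0:ℝ)⁻¹ • ξ n := by
          rw [show η n = ‖ξ n‖⁻¹ • ξ n from rfl, ← h0]
        rw [h00]
        simp
      · have := norm_smul_le (‖ξ n‖⁻¹) (ξ n)
        rw [Real.norm_eq_abs, abs_of_pos (inv_pos.mpr h0), inv_mul_cancel₀ h0.ne'] at this
        exact this
    have hrep : ∀ n, ∃ m : X, Submodule.Quotient.mk m = η n ∧ ‖m‖ < 2 := by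
      intro n
      obtain ⟨m, hm1, hm2⟩ := Submodule.Quotient.norm_mk_lt (η n) one_pos
      exact ⟨m, hm1, lt_of_lt_of_le hm2 (by linarith [hηb n])⟩
    choose ζ hζ1 hζ2 using hrep
    obtain ⟨e', _, φ, hφ, hζφ⟩ := tendsto_subseq_of_bounded
      (Metric.isBounded_closedBall (x := (0:X)) (r := 2))
      (fun n => by simpa [Metric.mem_closedBall, dist_zero_right] using (hζ2 n).le)
    set e : X ⧸ Z := Submodule.Quotient.mk e' with hedef
    have hηφ : Tendsto (fun n => η (φ n)) atTop (𝓝 e) := by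
      have h1 := ((lipschitz_qmk Z).continuous.tendsto e').comp hζφ
      have h2 : (fun n : ℕ => (Submodule.Quotient.mk (ζ (φ n)) : X ⧸ Z)) = fun n => η (φ n) := by
        funext n
        rw [hζ1]
      rw [← h2]
      exact h1
    have hsφ : Tendsto (fun n => ‖ξ (φ n)‖) atTop atTop := hsn.comp hφ.tendsto_atTop
    have hnorme : ‖e‖ = 1 := by
      have h1 : Tendsto (fun n => ‖η (φ n)‖) atTop (𝓝 ‖e‖) :=
        (continuous_norm.tendsto e).comp hηφ
      have h2 : ∀ᶠ n in atTop, ‖η (φ n)‖ = 1 := by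
        filter_upwards [hsφ (eventually_ge_atTop 1)] with n hn
        have h0 : (0:ℝ) < ‖ξ (φ n)‖ := lt_of_lt_of_le one_pos hn
        rw [show η (φ n) = ‖ξ (φ n)‖⁻¹ • ξ (φ n) from rfl,
          norm_smul_pos (inv_pos.mpr h0), inv_mul_cancel₀ h0.ne']
      have h3 : Tendsto (fun n => ‖η (φ n)‖) atTop (𝓝 1) :=
        tendsto_const_nhds.congr' (h2.mono fun n hn => hn.symm)
      exact tendsto_nhds_unique h1 h3
    have he : e ≠ 0 := fun h => by simp [h] at hnorme
    have hto1 : Tendsto (fun n => sphInl (ξ (φ n))) atTop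
        (𝓝 (sphInr (rayOfNeZero ℝ e he))) :=
      tendsto_inl_inr he hsφ hηφ
    -- the second sequence
    have hsφ' : Tendsto (fun n => ‖ξ' (φ n)‖) atTop atTop := by
      have hmono : ∀ n, ‖ξ (φ n)‖ - 1 ≤ ‖ξ' (φ n)‖ := by
        intro n
        have h1 : ‖ξ (φ n)‖ ≤ ‖ξ' (φ n)‖ + ‖ξ (φ n) - ξ' (φ n)‖ := by
          have e : ξ' (φ n) + (ξ (φ n) - ξ' (φ n)) = ξ (φ n) := by abel
          calc ‖ξ (φ n)‖ = ‖ξ' (φ n) + (ξ (φ n) - ξ' (φ n))‖ := by rw [e]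
            _ ≤ _ := norm_add_le _ _
        have h2 : ‖ξ (φ n) - ξ' (φ n)‖ ≤ 1 := by
          rw [norm_sub_rev]
          refine le_trans (hd (φ n)) ?_
          rw [div_le_one (by positivity)]
          linarith [(Nat.cast_nonneg (φ n) : (0:ℝ) ≤ φ n)]
        linarith
      have hbase : Tendsto (fun n => ‖ξ (φ n)‖ - 1) atTop atTop := by
        have := tendsto_atTop_add_const_right atTop (-1) hsφ
        refine this.congr fun n => ?_
        ring
      exact tendsto_atTop_mono hmono hbase
    have hη'φ : Tendsto (fun n => ‖ξ' (φ n)‖⁻¹ • ξ' (φ n)) atTop (𝓝 e) := by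
      have hev : ∀ᶠ n in atTop, ‖(‖ξ' (φ n)‖⁻¹ • ξ' (φ n)) - η (φ n)‖
          ≤ 2 * (1 / ((φ n : ℝ) + 1)) := by
        filter_upwards [hsφ (eventually_ge_atTop 1), hsφ' (eventually_ge_atTop 1)] with n h1 h2
        have hdb := dir_sub_bound (ξ := ξ (φ n)) (ξ' := ξ' (φ n)) h1 h2
        have heq : η (φ n) = ‖ξ (φ n)‖⁻¹ • ξ (φ n) := rfl
        rw [heq]
        refine le_trans hdb ?_
        have := hd (φ n)
        linarith
      have hg0 : Tendsto (fun n : ℕ => 2 * (1 / ((φ n : ℝ) + 1))) atTop (𝓝 0) := by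
        have h1 : Tendsto (fun n : ℕ => 1 / ((φ n : ℝ) + 1)) atTop (𝓝 0) := by
          have := (tendsto_one_div_add_atTop_nhds_zero_nat (𝕜 := ℝ)).comp hφ.tendsto_atTop
          exact this
        simpa using h1.const_mul (2 : ℝ)
      have hdiff0 : Tendsto (fun n => (‖ξ' (φ n)‖⁻¹ • ξ' (φ n)) - η (φ n)) atTop (𝓝 0) :=
        squeeze_zero_norm' hev hg0
      have hsum := hηφ.add hdiff0
      have heq2 : (fun n => η (φ n) + ((‖ξ' (φ n)‖⁻¹ • ξ' (φ n)) - η (φ n)))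
          = fun n => ‖ξ' (φ n)‖⁻¹ • ξ' (φ n) := by
        funext n
        abel
      rw [heq2] at hsum
      simpa using hsum
    have hto2 : Tendsto (fun n => sphInl (ξ' (φ n))) atTop
        (𝓝 (sphInr (rayOfNeZero ℝ e he))) :=
      tendsto_inl_inr he hsφ' hη'φ
    have hv1 : Tendsto (fun n => f (x (φ n))) atTop
        (𝓝 (v (sphInr (rayOfNeZero ℝ e he)))) := (v.continuous.tendsto _).comp hto1
    have hv2 : Tendsto (fun n => f (x' (φ n))) atTop
        (𝓝 (v (sphInr (rayOfNeZero ℝ e he)))) := (v.continuous.tendsto _).comp hto2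
    have hdist0 : Tendsto (fun n => dist (f (x (φ n))) (f (x' (φ n)))) atTop (𝓝 0) := by
      simpa using hv1.dist hv2
    obtain ⟨n, hn⟩ := (hdist0.eventually (gt_mem_nhds hε)).exists
    exact absurd hn (not_lt.mpr (hsep (φ n)))
  · -- quotient norms bounded along a subsequence
    push_neg at hb
    obtain ⟨M, hM⟩ := hb
    obtain ⟨φ, hφ, hφM⟩ := Filter.extraction_of_frequently_atTop hM
    have hrep : ∀ n, ∃ m : X, Submodule.Quotient.mk m = ξ (φ n) ∧ ‖m‖ < M + 1 := by
      intro n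
      obtain ⟨m, hm1, hm2⟩ := Submodule.Quotient.norm_mk_lt (ξ (φ n)) one_pos
      exact ⟨m, hm1, lt_of_lt_of_le hm2 (add_le_add_left (hφM n) 1)⟩
    choose r hr1 hr2 using hrep
    obtain ⟨p, _, ψ, hψ, hrψ⟩ := tendsto_subseq_of_bounded
      (Metric.isBounded_closedBall (x := (0:X)) (r := M+1))
      (fun n => by simpa [Metric.mem_closedBall, dist_zero_right] using (hr2 n).le)
    set g : ℕ → X := fun n => r n + (x' (φ n) - x (φ n)) with hgdef
    have hdiff : Tendsto (fun n => x' (φ (ψ n)) - x (φ (ψ n))) atTop (𝓝 0) := by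
      apply squeeze_zero_norm (a := fun n : ℕ => 1 / ((n:ℝ) + 1))
      · intro n
        rw [← dist_eq_norm']
        refine le_trans (hdst (φ (ψ n))).le ?_
        have hc : (n : ℝ) ≤ (φ (ψ n) : ℝ) := by
          exact_mod_cast le_trans (hψ.le_apply) (hφ.le_apply)
        exact one_div_le_one_div_of_le (by positivity) (by linarith)
      · exact tendsto_one_div_add_atTop_nhds_zero_nat
    have hgψ : Tendsto (fun n => g (ψ n)) atTop (𝓝 p) := by
      have := hrψ.add hdiff
      simpa using this
    have hfr : ∀ n, f (r n) = f (x (φ n)) := by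
      intro n
      show v _ = v _
      rw [hr1 n]
    have hfg : ∀ n, f (g n) = f (x' (φ n)) := by
      intro n
      show v _ = v _
      congr 1
      show Sum.inl _ = Sum.inl _
      congr 1
      rw [hgdef]
      simp only [Submodule.Quotient.mk_add, Submodule.Quotient.mk_sub]
      rw [hr1 n]
      show ξ (φ n) + (ξ' (φ n) - ξ (φ n)) = ξ' (φ n)
      abel
    have hv1 : Tendsto (fun n => f (x (φ (ψ n)))) atTop (𝓝 (f p)) := by
      have := (hfc.tendsto p).comp hrψ
      refine this.congr fun n => ?_
      exact hfr (ψ n)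
    have hv2 : Tendsto (fun n => f (x' (φ (ψ n)))) atTop (𝓝 (f p)) := by
      have := (hfc.tendsto p).comp hgψ
      refine this.congr fun n => ?_
      exact hfg (ψ n)
    have hdist0 : Tendsto (fun n => dist (f (x (φ (ψ n)))) (f (x' (φ (ψ n))))) atTop (𝓝 0) := by
      simpa using hv1.dist hv2
    obtain ⟨n, hn⟩ := (hdist0.eventually (gt_mem_nhds hε)).exists
    exact absurd hn (not_lt.mpr (hsep (φ (ψ n))))

end QuotLemmas

section AlgebraLemmas

variable {X : Type*} [NormedAddCommGroup X] [NormedSpace ℝ X] [FiniteDimensional ℝ X]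

theorem algebraMap_bcf_apply (c : ℂ) (x : X) : (algebraMap ℂ (X →ᵇ ℂ) c) x = c := by
  rw [BoundedContinuousFunction.algebraMap_apply]
  simp

/-- The star subalgebra of `Y`-invariant functions. -/
def invSubalg (Y : Submodule ℝ X) : StarSubalgebra ℂ (X →ᵇ ℂ) where
  carrier := {u : X →ᵇ ℂ | ∀ x : X, ∀ y ∈ Y, u (x + y) = u x}
  mul_mem' := by
    intro u v hu hv x y hy
    simp only [BoundedContinuousFunction.mul_apply]
    rw [hu x y hy, hv x y hy]
  one_mem' := by intro x y hy; simp
  add_mem' := by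
    intro u v hu hv x y hy
    simp only [BoundedContinuousFunction.add_apply]
    rw [hu x y hy, hv x y hy]
  zero_mem' := by intro x y hy; simp
  algebraMap_mem' := by intro c x y hy; simp [algebraMap_bcf_apply]
  star_mem' := by
    intro u hu x y hy
    simp only [BoundedContinuousFunction.star_apply]
    rw [hu x y hy]

theorem isClosed_invSubalg (Y : Submodule ℝ X) :
    IsClosed ((invSubalg Y : Set (X →ᵇ ℂ))) := by
  have heq : (invSubalg Y : Set (X →ᵇ ℂ))
      = ⋂ (x : X), ⋂ (y : Y), {u : X →ᵇ ℂ | u (x + (y:X)) = u x} := by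
    ext u
    simp only [Set.mem_iInter, Set.mem_setOf_eq]
    constructor
    · intro h x y
      exact h x y y.2
    · intro h x y hy
      exact h x ⟨y, hy⟩
  rw [heq]
  exact isClosed_iInter fun x => isClosed_iInter fun y =>
    isClosed_eq (continuous_eval_const _)
      (continuous_eval_const _)

/-- The star subalgebra of uniformly continuous functions. -/
def ucSubalg : StarSubalgebra ℂ (X →ᵇ ℂ) where
  carrier := {u : X →ᵇ ℂ | UniformContinuous ⇑u}
  mul_mem' := by
    intro u v hu hv
    rw [Set.mem_setOf_eq, Metric.uniformContinuous_iff] at hu hv ⊢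
    intro ε hε
    have hCu : (0:ℝ) < ‖u‖ + 1 := by positivity
    have hCv : (0:ℝ) < ‖v‖ + 1 := by positivity
    obtain ⟨δ₁, hδ₁, h₁⟩ := hu (ε / (4 * (‖v‖ + 1))) (by positivity)
    obtain ⟨δ₂, hδ₂, h₂⟩ := hv (ε / (4 * (‖u‖ + 1))) (by positivity)
    refine ⟨min δ₁ δ₂, lt_min hδ₁ hδ₂, fun {a b} hab => ?_⟩
    have e : (u * v) a - (u * v) b = u a * (v a - v b) + (u a - u b) * v b := by
      simp only [BoundedContinuousFunction.mul_apply]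
      ring
    rw [dist_eq_norm, e]
    have key1 : ‖u a * (v a - v b)‖ ≤ (‖u‖ + 1) * (ε / (4 * (‖u‖ + 1))) := by
      rw [norm_mul]
      have b1 : ‖u a‖ ≤ ‖u‖ + 1 :=
        le_trans (BoundedContinuousFunction.norm_coe_le_norm u a) (by linarith)
      have b2 : ‖v a - v b‖ ≤ ε / (4 * (‖u‖ + 1)) := by
        rw [← dist_eq_norm]
        exact (h₂ (lt_of_lt_of_le hab (min_le_right _ _))).le
      exact mul_le_mul b1 b2 (norm_nonneg _) (by positivity)
    have key2 : ‖(u a - u b) * v b‖ ≤ (ε / (4 * (‖v‖ + 1))) * (‖v‖ + 1) := by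
      rw [norm_mul]
      have b1 : ‖u a - u b‖ ≤ ε / (4 * (‖v‖ + 1)) := by
        rw [← dist_eq_norm]
        exact (h₁ (lt_of_lt_of_le hab (min_le_left _ _))).le
      have b2 : ‖v b‖ ≤ ‖v‖ + 1 :=
        le_trans (BoundedContinuousFunction.norm_coe_le_norm v b) (by linarith)
      exact mul_le_mul b1 b2 (norm_nonneg _) (by positivity)
    have e1 : (‖u‖ + 1) * (ε / (4 * (‖u‖ + 1))) = ε / 4 := by field_simp
    have e2 : (ε / (4 * (‖v‖ + 1))) * (‖v‖ + 1) = ε / 4 := by field_simp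
    calc ‖u a * (v a - v b) + (u a - u b) * v b‖
        ≤ ‖u a * (v a - v b)‖ + ‖(u a - u b) * v b‖ := norm_add_le _ _
      _ ≤ ε / 4 + ε / 4 := by
          rw [e1] at key1
          rw [e2] at key2
          exact add_le_add key1 key2
      _ < ε := by linarith
  one_mem' := by
    rw [Set.mem_setOf_eq]
    have : ⇑(1 : X →ᵇ ℂ) = fun _ => (1:ℂ) := rfl
    rw [this]
    exact uniformContinuous_const
  add_mem' := by
    intro u v hu hv
    rw [Set.mem_setOf_eq] at hu hv ⊢
    have : ⇑(u + v) = fun x => u x + v x := rfl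
    rw [this]
    exact hu.add hv
  zero_mem' := by
    rw [Set.mem_setOf_eq]
    exact uniformContinuous_const
  algebraMap_mem' := by
    intro c
    rw [Set.mem_setOf_eq]
    have : ⇑(algebraMap ℂ (X →ᵇ ℂ) c) = fun _ => c := by
      funext x
      exact algebraMap_bcf_apply c x
    rw [this]
    exact uniformContinuous_const
  star_mem' := by
    intro u hu
    rw [Set.mem_setOf_eq] at hu ⊢
    rw [Metric.uniformContinuous_iff] at hu ⊢
    intro ε hε
    obtain ⟨δ, hδ, h⟩ := hu ε hε
    refine ⟨δ, hδ, fun {a b} hab => ?_⟩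
    have : dist (star u a) (star u b) = dist (u a) (u b) := by
      simp only [BoundedContinuousFunction.star_apply]
      rw [dist_eq_norm, dist_eq_norm, ← star_sub, norm_star]
    rw [this]
    exact h hab

theorem isClosed_ucSubalg :
    IsClosed ((ucSubalg : StarSubalgebra ℂ (X →ᵇ ℂ)) : Set (X →ᵇ ℂ)) := by
  apply isClosed_of_closure_subset
  intro u hu
  rw [Metric.mem_closure_iff] at hu
  show UniformContinuous ⇑u
  rw [Metric.uniformContinuous_iff]
  intro ε hε
  obtain ⟨u', hu'mem, hdu⟩ := hu (ε/3) (by positivity)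
  have hu'uc : UniformContinuous ⇑u' := hu'mem
  rw [Metric.uniformContinuous_iff] at hu'uc
  obtain ⟨δ, hδ, h⟩ := hu'uc (ε/3) (by positivity)
  refine ⟨δ, hδ, fun {a b} hab => ?_⟩
  have t1 : dist (u a) (u' a) ≤ dist u u' := BoundedContinuousFunction.dist_coe_le_dist a
  have t2 : dist (u' b) (u b) ≤ dist u u' := by
    rw [dist_comm]
    exact BoundedContinuousFunction.dist_coe_le_dist b
  have t3 : dist (u' a) (u' b) < ε/3 := h hab
  calc dist (u a) (u b) ≤ dist (u a) (u' a) + dist (u' a) (u' b) + dist (u' b) (u b) :=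
        dist_triangle4 _ _ _ _
    _ < ε := by linarith

theorem gen_mem_EAlgY (Y : Submodule ℝ X) {u : X →ᵇ ℂ} (h : u ∈ QGenSet X Y) :
    u ∈ EAlgY X Y :=
  (StarSubalgebra.le_topologicalClosure _) (StarAlgebra.subset_adjoin ℂ _ h)

theorem EAlgY_le_closed (Y : Submodule ℝ X) (T : StarSubalgebra ℂ (X →ᵇ ℂ))
    (hT : IsClosed (T : Set (X →ᵇ ℂ))) (hgen : QGenSet X Y ⊆ T) : EAlgY X Y ≤ T :=
  StarSubalgebra.topologicalClosure_minimal (StarAlgebra.adjoin_le hgen) hT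

theorem EAlgY_antitone {Y₁ Y₂ : Submodule ℝ X} (h : Y₁ ≤ Y₂) : EAlgY X Y₂ ≤ EAlgY X Y₁ := by
  apply EAlgY_le_closed
  · exact StarSubalgebra.isClosed_topologicalClosure _
  · rintro u ⟨Z, hYZ, v, hv⟩
    exact gen_mem_EAlgY _ ⟨Z, le_trans h hYZ, v, hv⟩

theorem inv_of_mem_EAlgY (Y : Submodule ℝ X) {u : X →ᵇ ℂ} (hu : u ∈ EAlgY X Y) :
    ∀ x : X, ∀ y ∈ Y, u (x + y) = u x := by
  have hle : EAlgY X Y ≤ invSubalg Y := by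
    apply EAlgY_le_closed Y _ (isClosed_invSubalg Y)
    rintro w ⟨Z, hYZ, v, hv⟩
    intro x y hy
    rw [hv, hv]
    congr 2
    have h0 : (Submodule.Quotient.mk y : X ⧸ Z) = 0 :=
      (Submodule.Quotient.mk_eq_zero Z).mpr (hYZ hy)
    rw [Submodule.Quotient.mk_add, h0, add_zero]
  exact hle hu

theorem uc_of_mem_EAlgY (Y : Submodule ℝ X) {u : X →ᵇ ℂ} (hu : u ∈ EAlgY X Y) :
    UniformContinuous ⇑u := by
  have hle : EAlgY X Y ≤ ucSubalg := by
    apply EAlgY_le_closed Y _ isClosed_ucSubalg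
    rintro w ⟨Z, hYZ, v, hv⟩
    show UniformContinuous ⇑w
    have : ⇑w = fun x => v (Sum.inl (Submodule.Quotient.mk x)) := funext hv
    rw [this]
    exact uc_gen Z v
  exact hle hu

end AlgebraLemmas

section KeyLemma

variable {X : Type*} [NormedAddCommGroup X] [NormedSpace ℝ X] [FiniteDimensional ℝ X]

/-- The translation-limit property. -/
def TransLim (Y'' : Submodule ℝ X) (y : X) (u : X →ᵇ ℂ) : Prop :=
  ∃ w : X →ᵇ ℂ, w ∈ EAlgY X Y'' ∧ ∀ ε : ℝ, 0 < ε → ∀ M : ℝ, 0 ≤ M →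
    ∃ R : ℝ, ∀ r : ℝ, R ≤ r → ∀ x : X, ‖x‖ ≤ M → ‖u (x + r • y) - w x‖ ≤ ε

theorem transLim_gen (Y' : Submodule ℝ X) (y : X) {u : X →ᵇ ℂ} (hmem : u ∈ QGenSet X Y') :
    TransLim (Y' ⊔ Submodule.span ℝ {y}) y u := by
  obtain ⟨Z, hYZ, v, hv⟩ := hmem
  by_cases hy : y ∈ Z
  · refine ⟨u, ?_, ?_⟩
    · exact gen_mem_EAlgY _ ⟨Z, sup_le hYZ (Submodule.span_le.mpr
        (Set.singleton_subset_iff.mpr hy)), v, hv⟩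
    · intro ε hε M hM
      refine ⟨0, fun r _ x _ => ?_⟩
      have heq : u (x + r • y) = u x := by
        rw [hv, hv]
        congr 2
        have h0 : (Submodule.Quotient.mk (r • y) : X ⧸ Z) = 0 :=
          (Submodule.Quotient.mk_eq_zero Z).mpr (Submodule.smul_mem Z r hy)
        rw [Submodule.Quotient.mk_add, h0, add_zero]
      rw [heq, sub_self, norm_zero]
      exact hε.le
  · have ha : (Submodule.Quotient.mk y : X ⧸ Z) ≠ 0 := by
      intro h0
      exact hy ((Submodule.Quotient.mk_eq_zero Z).mp h0)
    have hna : 0 < ‖(Submodule.Quotient.mk y : X ⧸ Z)‖ := norm_qmk_pos Z hy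
    set c : ℂ := v (sphInr (rayOfNeZero ℝ (Submodule.Quotient.mk y : X ⧸ Z) ha)) with hc
    refine ⟨algebraMap ℂ (X →ᵇ ℂ) c, algebraMap_mem _ c, ?_⟩
    intro ε hε M hM
    obtain ⟨R, hR⟩ := gen_limit ha hna v hε hM
    refine ⟨R, fun r hr x hx => ?_⟩
    have hmkx : ‖(Submodule.Quotient.mk x : X ⧸ Z)‖ ≤ M :=
      le_trans (Submodule.Quotient.norm_mk_le Z x) hx
    have hkey := hR r hr (Submodule.Quotient.mk x) hmkx
    have he1 : u (x + r • y) = v (Sum.inl ((Submodule.Quotient.mk x : X ⧸ Z)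
        + r • (Submodule.Quotient.mk y : X ⧸ Z))) := by
      rw [hv]
      congr 2
    have he2 : (algebraMap ℂ (X →ᵇ ℂ) c) x = c := algebraMap_bcf_apply c x
    rw [he1, he2, hc]
    exact hkey

theorem transLim_adjoin (Y' : Submodule ℝ X) (y : X) {u : X →ᵇ ℂ}
    (hu : u ∈ StarAlgebra.adjoin ℂ (QGenSet X Y')) :
    TransLim (Y' ⊔ Submodule.span ℝ {y}) y u := by
  induction hu using StarAlgebra.adjoin_induction with
  | mem u hmem => exact transLim_gen Y' y hmem
  | algebraMap c =>
    refine ⟨algebraMap ℂ (X →ᵇ ℂ) c, algebraMap_mem _ c, ?_⟩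
    intro ε hε M hM
    refine ⟨0, fun r _ x _ => ?_⟩
    rw [algebraMap_bcf_apply, algebraMap_bcf_apply, sub_self, norm_zero]
    exact hε.le
  | add u v hu hv ihu ihv =>
    obtain ⟨w₁, hw₁, h₁⟩ := ihu
    obtain ⟨w₂, hw₂, h₂⟩ := ihv
    refine ⟨w₁ + w₂, add_mem hw₁ hw₂, ?_⟩
    intro ε hε M hM
    obtain ⟨R₁, hR₁⟩ := h₁ (ε/2) (by positivity) M hM
    obtain ⟨R₂, hR₂⟩ := h₂ (ε/2) (by positivity) M hM
    refine ⟨max R₁ R₂, fun r hr x hx => ?_⟩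
    have e1 := hR₁ r (le_trans (le_max_left _ _) hr) x hx
    have e2 := hR₂ r (le_trans (le_max_right _ _) hr) x hx
    have heq : (u + v) (x + r • y) - (w₁ + w₂) x
        = (u (x + r • y) - w₁ x) + (v (x + r • y) - w₂ x) := by
      simp only [BoundedContinuousFunction.add_apply]
      ring
    rw [heq]
    calc ‖(u (x + r • y) - w₁ x) + (v (x + r • y) - w₂ x)‖
        ≤ ‖u (x + r • y) - w₁ x‖ + ‖v (x + r • y) - w₂ x‖ := norm_add_le _ _
      _ ≤ ε/2 + ε/2 := add_le_add e1 e2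
      _ = ε := by ring
  | mul u v hu hv ihu ihv =>
    obtain ⟨w₁, hw₁, h₁⟩ := ihu
    obtain ⟨w₂, hw₂, h₂⟩ := ihv
    refine ⟨w₁ * w₂, mul_mem hw₁ hw₂, ?_⟩
    intro ε hε M hM
    obtain ⟨R₁, hR₁⟩ := h₁ (ε / (2 * (‖w₂‖ + 1))) (by positivity) M hM
    obtain ⟨R₂, hR₂⟩ := h₂ (ε / (2 * (‖u‖ + 1))) (by positivity) M hM
    refine ⟨max R₁ R₂, fun r hr x hx => ?_⟩
    have e1 := hR₁ r (le_trans (le_max_left _ _) hr) x hx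
    have e2 := hR₂ r (le_trans (le_max_right _ _) hr) x hx
    have heq : (u * v) (x + r • y) - (w₁ * w₂) x
        = u (x + r • y) * (v (x + r • y) - w₂ x) + (u (x + r • y) - w₁ x) * w₂ x := by
      simp only [BoundedContinuousFunction.mul_apply]
      ring
    rw [heq]
    have key1 : ‖u (x + r • y) * (v (x + r • y) - w₂ x)‖ ≤ (‖u‖ + 1) * (ε / (2 * (‖u‖ + 1))) := by
      rw [norm_mul]
      exact mul_le_mul (le_trans (BoundedContinuousFunction.norm_coe_le_norm u _) (by linarith))
        e2 (norm_nonneg _) (by positivity)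
    have key2 : ‖(u (x + r • y) - w₁ x) * w₂ x‖ ≤ (ε / (2 * (‖w₂‖ + 1))) * (‖w₂‖ + 1) := by
      rw [norm_mul]
      exact mul_le_mul e1
        (le_trans (BoundedContinuousFunction.norm_coe_le_norm w₂ _) (by linarith))
        (norm_nonneg _) (by positivity)
    have f1 : (‖u‖ + 1) * (ε / (2 * (‖u‖ + 1))) = ε/2 := by
      field_simp
    have f2 : (ε / (2 * (‖w₂‖ + 1))) * (‖w₂‖ + 1) = ε/2 := by
      field_simp
    rw [f1] at key1
    rw [f2] at key2
    calc ‖u (x + r • y) * (v (x + r • y) - w₂ x) + (u (x + r • y) - w₁ x) * w₂ x‖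
        ≤ ‖u (x + r • y) * (v (x + r • y) - w₂ x)‖ + ‖(u (x + r • y) - w₁ x) * w₂ x‖ :=
          norm_add_le _ _
      _ ≤ ε/2 + ε/2 := add_le_add key1 key2
      _ = ε := by ring
  | star u hu ihu =>
    obtain ⟨w, hw, h⟩ := ihu
    refine ⟨star w, star_mem hw, ?_⟩
    intro ε hε M hM
    obtain ⟨R, hR⟩ := h ε hε M hM
    refine ⟨R, fun r hr x hx => ?_⟩
    have e1 := hR r hr x hx
    have heq : (star u) (x + r • y) - (star w) x = star (u (x + r • y) - w x) := by
      simp only [BoundedContinuousFunction.star_apply]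
      rw [star_sub]
    rw [heq, norm_star]
    exact e1

theorem transLim_mem (Y' : Submodule ℝ X) (y : X) {u : X →ᵇ ℂ} (hu : u ∈ EAlgY X Y') :
    TransLim (Y' ⊔ Submodule.span ℝ {y}) y u := by
  have hcl : u ∈ closure ((StarAlgebra.adjoin ℂ (QGenSet X Y') : Set (X →ᵇ ℂ))) := by
    rw [← StarSubalgebra.topologicalClosure_coe]
    exact hu
  have hseq : ∀ n : ℕ, ∃ u' ∈ StarAlgebra.adjoin ℂ (QGenSet X Y'),
      dist u u' < 1/((n:ℝ)+1) := by
    intro n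
    rcases Metric.mem_closure_iff.mp hcl (1/((n:ℝ)+1)) (by positivity) with ⟨u', hmem, hd⟩
    exact ⟨u', hmem, hd⟩
  choose us hus hdus using hseq
  have hPn : ∀ n, TransLim (Y' ⊔ Submodule.span ℝ {y}) y (us n) :=
    fun n => transLim_adjoin Y' y (hus n)
  choose ws hws hest using hPn
  -- the approximants ws form a Cauchy sequence
  have hdiff : ∀ n m : ℕ, ‖ws n - ws m‖ ≤ dist u (us n) + dist u (us m) := by
    intro n m
    rw [BoundedContinuousFunction.norm_le (add_nonneg dist_nonneg dist_nonneg)]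
    intro x
    have hx : ∀ ε : ℝ, 0 < ε →
        ‖(ws n - ws m) x‖ ≤ dist u (us n) + dist u (us m) + (ε + ε) := by
      intro ε hε
      obtain ⟨R₁, h₁⟩ := hest n ε hε ‖x‖ (norm_nonneg x)
      obtain ⟨R₂, h₂⟩ := hest m ε hε ‖x‖ (norm_nonneg x)
      set r := max R₁ R₂
      have e₁ := h₁ r (le_max_left _ _) x le_rfl
      have e₂ := h₂ r (le_max_right _ _) x le_rfl
      have d₁ : ‖us n (x + r • y) - us m (x + r • y)‖ ≤ dist u (us n) + dist u (us m) := by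
        have t1 : dist (us n (x + r • y)) (u (x + r • y)) ≤ dist u (us n) := by
          rw [dist_comm u (us n)]
          exact BoundedContinuousFunction.dist_coe_le_dist _
        have t2 : dist (u (x + r • y)) (us m (x + r • y)) ≤ dist u (us m) :=
          BoundedContinuousFunction.dist_coe_le_dist _
        calc ‖us n (x + r • y) - us m (x + r • y)‖
            = dist (us n (x + r • y)) (us m (x + r • y)) := (dist_eq_norm _ _).symm
          _ ≤ dist (us n (x + r • y)) (u (x + r • y))
              + dist (u (x + r • y)) (us m (x + r • y)) := dist_triangle _ _ _
          _ ≤ dist u (us n) + dist u (us m) := add_le_add t1 t2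
      have hid : (ws n - ws m) x = (ws n x - us n (x + r • y))
          + (us n (x + r • y) - us m (x + r • y)) + (us m (x + r • y) - ws m x) := by
        simp only [BoundedContinuousFunction.sub_apply]
        ring
      have b1 : ‖ws n x - us n (x + r • y)‖ ≤ ε := by
        rw [norm_sub_rev]
        exact e₁
      calc ‖(ws n - ws m) x‖
          = ‖(ws n x - us n (x + r • y)) + (us n (x + r • y) - us m (x + r • y))
            + (us m (x + r • y) - ws m x)‖ := by rw [hid]
        _ ≤ ‖ws n x - us n (x + r • y)‖ + ‖us n (x + r • y) - us m (x + r • y)‖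
            + ‖us m (x + r • y) - ws m x‖ := norm_add₃_le
        _ ≤ ε + (dist u (us n) + dist u (us m)) + ε := by
            refine add_le_add (add_le_add b1 d₁) e₂
        _ = dist u (us n) + dist u (us m) + (ε + ε) := by ring
    refine le_of_forall_pos_le_add fun ε hε => ?_
    have := hx (ε/2) (by positivity)
    linarith
  have hcauchy : CauchySeq ws := by
    apply cauchySeq_of_le_tendsto_0 (b := fun N : ℕ => 2/((N:ℝ)+1))
    · intro n m N hn hm
      rw [dist_eq_norm]
      refine le_trans (hdiff n m) ?_
      have b1 : dist u (us n) ≤ 1/((N:ℝ)+1) := by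
        refine le_trans (hdus n).le ?_
        apply one_div_le_one_div_of_le (by positivity)
        have : (N:ℝ) ≤ (n:ℝ) := by exact_mod_cast hn
        linarith
      have b2 : dist u (us m) ≤ 1/((N:ℝ)+1) := by
        refine le_trans (hdus m).le ?_
        apply one_div_le_one_div_of_le (by positivity)
        have : (N:ℝ) ≤ (m:ℝ) := by exact_mod_cast hm
        linarith
      have : 2/((N:ℝ)+1) = 1/((N:ℝ)+1) + 1/((N:ℝ)+1) := by ring
      linarith
    · have := tendsto_one_div_add_atTop_nhds_zero_nat.const_mul (2:ℝ)
      simp only [mul_zero] at this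
      refine this.congr fun n => ?_
      ring
  obtain ⟨w, hwlim⟩ := cauchySeq_tendsto_of_complete hcauchy
  have hwmem : w ∈ EAlgY X (Y' ⊔ Submodule.span ℝ {y}) := by
    have hclosed : IsClosed ((EAlgY X (Y' ⊔ Submodule.span ℝ {y}) : Set (X →ᵇ ℂ))) :=
      StarSubalgebra.isClosed_topologicalClosure _
    exact hclosed.mem_of_tendsto hwlim (Filter.Eventually.of_forall fun n => hws n)
  refine ⟨w, hwmem, ?_⟩
  intro ε hε M hM
  have h1 : ∀ᶠ n : ℕ in atTop, dist (ws n) w < ε/3 :=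
    hwlim (Metric.ball_mem_nhds w (by positivity))
  have h2 : ∀ᶠ n : ℕ in atTop, 1/((n:ℝ)+1) < ε/3 :=
    tendsto_one_div_add_atTop_nhds_zero_nat.eventually
      (gt_mem_nhds (show (0:ℝ) < ε/3 by positivity))
  obtain ⟨n, hn1, hn2⟩ := (h1.and h2).exists
  obtain ⟨R, hR⟩ := hest n (ε/3) (by positivity) M hM
  refine ⟨R, fun r hr x hx => ?_⟩
  have e1 := hR r hr x hx
  have b1 : ‖u (x + r • y) - us n (x + r • y)‖ < ε/3 := by
    calc ‖u (x + r • y) - us n (x + r • y)‖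
        = dist (u (x + r • y)) (us n (x + r • y)) := (dist_eq_norm _ _).symm
      _ ≤ dist u (us n) := BoundedContinuousFunction.dist_coe_le_dist _
      _ < 1/((n:ℝ)+1) := hdus n
      _ < ε/3 := hn2
  have b3 : ‖ws n x - w x‖ < ε/3 := by
    calc ‖ws n x - w x‖ = dist (ws n x) (w x) := (dist_eq_norm _ _).symm
      _ ≤ dist (ws n) w := BoundedContinuousFunction.dist_coe_le_dist _
      _ < ε/3 := hn1
  have hid : u (x + r • y) - w x = (u (x + r • y) - us n (x + r • y))
      + (us n (x + r • y) - ws n x) + (ws n x - w x) := by ring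
  calc ‖u (x + r • y) - w x‖
      = ‖(u (x + r • y) - us n (x + r • y)) + (us n (x + r • y) - ws n x)
        + (ws n x - w x)‖ := by rw [hid]
    _ ≤ ‖u (x + r • y) - us n (x + r • y)‖ + ‖us n (x + r • y) - ws n x‖
        + ‖ws n x - w x‖ := norm_add₃_le
    _ ≤ ε/3 + ε/3 + ε/3 := add_le_add (add_le_add b1.le e1) b3.le
    _ = ε := by ring

theorem step_invariant (Y' : Submodule ℝ X) (y : X) {u : X →ᵇ ℂ} (hu : u ∈ EAlgY X Y')
    (hinv : ∀ (x : X) (r : ℝ), u (x + r • y) = u x) :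
    u ∈ EAlgY X (Y' ⊔ Submodule.span ℝ {y}) := by
  obtain ⟨w, hw, hest⟩ := transLim_mem Y' y hu
  have : u = w := by
    ext x
    have hle : ∀ ε : ℝ, 0 < ε → ‖u x - w x‖ ≤ ε := by
      intro ε hε
      obtain ⟨R, hR⟩ := hest ε hε ‖x‖ (norm_nonneg x)
      have := hR R le_rfl x le_rfl
      rwa [hinv x R] at this
    have h0 : ‖u x - w x‖ ≤ 0 := le_of_forall_pos_le_add (by simpa using hle)
    have := le_antisymm h0 (norm_nonneg _)
    rwa [norm_eq_zero, sub_eq_zero] at this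
  rw [this]
  exact hw

theorem hard_inclusion (Y : Submodule ℝ X) {u : X →ᵇ ℂ} (hu : u ∈ EAlg X)
    (hinv : ∀ x : X, ∀ y ∈ Y, u (x + y) = u x) : u ∈ EAlgY X Y := by
  have key : ∀ l : List X, (∀ z ∈ l, z ∈ Y) →
      u ∈ EAlgY X (Submodule.span ℝ {z | z ∈ l}) := by
    intro l
    induction l with
    | nil =>
      intro _
      have he : ({z : X | z ∈ ([] : List X)} : Set X) = ∅ := by simp
      rw [he, Submodule.span_empty]
      exact hu
    | cons a l ih =>
      intro h
      have h1 := ih fun z hz => h z (List.mem_cons_of_mem _ hz)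
      have h2 : u ∈ EAlgY X (Submodule.span ℝ {z | z ∈ l} ⊔ Submodule.span ℝ {a}) := by
        apply step_invariant _ a h1
        intro x r
        exact hinv x (r • a) (Submodule.smul_mem Y r (h a (List.mem_cons_self)))
      have he : Submodule.span ℝ {z : X | z ∈ a :: l}
          = Submodule.span ℝ {z : X | z ∈ l} ⊔ Submodule.span ℝ {a} := by
        have : ({z : X | z ∈ a :: l} : Set X) = insert a {z : X | z ∈ l} := by
          ext z
          simp
        rw [this, Submodule.span_insert, sup_comm]
      rwa [he]
  obtain ⟨S, hS⟩ := IsNoetherian.noetherian Y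
  have hmem : ∀ z ∈ S.toList, z ∈ Y := by
    intro z hz
    rw [← hS]
    apply Submodule.subset_span
    simpa using hz
  have := key S.toList hmem
  have he : ({z : X | z ∈ S.toList} : Set X) = (S : Set X) := by
    ext z
    simp
  rwa [he, hS] at this

end KeyLemma

/-- `ℰ(X/Y)` is exactly the set of `Y`-translation-invariant
elements of `ℰ(X)`, i.e. `ℰ(X) ∩ C_b^u(X/Y)`. -/
theorem statement13 {X : Type*} [NormedAddCommGroup X] [NormedSpace ℝ X]
    [FiniteDimensional ℝ X] (Y : Submodule ℝ X) :
    (EAlgY X Y : Set (X →ᵇ ℂ)) =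
      {u : X →ᵇ ℂ | u ∈ EAlg X ∧ ∀ x : X, ∀ y ∈ Y, u (x + y) = u x} ∧
    (EAlgY X Y : Set (X →ᵇ ℂ)) =
      {u : X →ᵇ ℂ | u ∈ EAlg X ∧ UniformContinuous (⇑u) ∧
        ∀ x : X, ∀ y ∈ Y, u (x + y) = u x} := by
  constructor
  · apply Set.Subset.antisymm
    · intro u hu
      exact ⟨EAlgY_antitone bot_le hu, inv_of_mem_EAlgY Y hu⟩
    · rintro u ⟨hu, hinv⟩
      exact hard_inclusion Y hu hinv
  · apply Set.Subset.antisymm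
    · intro u hu
      exact ⟨EAlgY_antitone bot_le hu, uc_of_mem_EAlgY Y hu, inv_of_mem_EAlgY Y hu⟩
    · rintro u ⟨hu, _, hinv⟩
      exact hard_inclusion Y hu hinv
end
end
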